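/- arXiv:1705.10614 — 5 statements merged into one kernel-verified Lean document; each statement's English description precedes it below -/
import Mathlib

section
/- Let m > n ≥ 1 be integers and let L be the AIR matrix of size m × n with Euclidean data λ_i, β_i, l. Let (j,k) be a position with L(j,k) = 1 and j ≥ n. (a) If (j,k) lies in the odd-indexed block I_{β_{2i+1}λ_{2i+1}×λ_{2i+1}} (rows m−λ_{2i},…,m−λ_{2i+2}−1, columns n−λ_{2i+1},…,n−1), then the up-distance satisfies d_up(j,k) = λ_{2i+1}. (b) If (j,k) lies in the even-indexed block I_{λ_{2i}×β_{2i}λ_{2i}} (rows m−λ_{2i},…,m−1, columns n−λ_{2i−1},…,n−λ_{2i−1}+β_{2i}λ_{2i}−1), and the local column index k_R = k − (n−λ_{2i−1}) is written as k_R = c·λ_{2i} + d with 0 ≤ d < λ_{2i}, then d_up(j,k) = λ_{2i−1} − c·λ_{2i}. -/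
set_option linter.unusedVariables false

/-- Entry (row `j`, column `k`) of the `m × n` AIR (Adjacent Independent Row) matrix,
as a 0/1 natural number, defined by the recursive construction algorithm
(stack `⌊m/n⌋` copies of `I_n`; fill the first `n - n mod (m mod n)` columns of the
remaining `m mod n` rows with horizontally stacked identities `I_{m mod n}`; recurse). -/
def airEntry : ℕ → ℕ → ℕ → ℕ → ℕ
  | m, n, j, k =>
    if hn : n = 0 then 0
    else if hr : m % n = 0 then (if j % n = k then 1 else 0)
    else if j < m - m % n then (if j % n = k then 1 else 0)
    else if k < n - n % (m % n) then (if k % (m % n) = j - (m - m % n) then 1 else 0)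
    else airEntry (m % n) (n % (m % n)) (j - (m - m % n)) (k - (n - n % (m % n)))
  termination_by m n j k => n
  decreasing_by
    have h1 : m % n < n := Nat.mod_lt _ (Nat.pos_of_ne_zero hn)
    have h2 : n % (m % n) < m % n := Nat.mod_lt _ (Nat.pos_of_ne_zero hr)
    omega
/-- Euclidean data of the `m × n` AIR matrix: `airLam m n (i+1)` is `λ_i`
(the index is shifted by one, so that `airLam m n 0 = λ_{-1} = n`,
`airLam m n 1 = λ_0 = m - n`, and `λ_{i+1} = λ_{i-1} mod λ_i`). -/
def airLam (m n : ℕ) : ℕ → ℕ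
  | 0 => n
  | 1 => m - n
  | i + 2 => if airLam m n (i + 1) = 0 then 0 else airLam m n i % airLam m n (i + 1)

/-- `airBeta m n i` is `β_i = ⌊λ_{i-1} / λ_i⌋` of the Euclidean data of the AIR matrix. -/
def airBeta (m n i : ℕ) : ℕ := airLam m n i / airLam m n (i + 1)

/-- `IsUpDist m n j k v` says that the up-distance of the entry `L(j,k)` of the `m × n`
AIR matrix equals `v`: `j - v` is the largest row index `j' < j` with `L(j',k) = 1`. -/
def IsUpDist (m n j k v : ℕ) : Prop :=
  0 < v ∧ v ≤ j ∧ airEntry m n (j - v) k = 1 ∧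
    ∀ j' : ℕ, j - v < j' → j' < j → airEntry m n j' k = 0


private lemma lam_step_le (m n i : ℕ) : airLam m n (i+2) ≤ airLam m n (i+1) := by
  show (if airLam m n (i + 1) = 0 then 0 else airLam m n i % airLam m n (i + 1)) ≤ _
  split
  · omega
  · exact le_of_lt (Nat.mod_lt _ (by omega))

private lemma lam_anti (m n a b : ℕ) (h : a ≤ b) : airLam m n (b+1) ≤ airLam m n (a+1) := by
  obtain ⟨t, rfl⟩ : ∃ t, b = a + t := ⟨b - a, by omega⟩
  clear h
  induction t with
  | zero => simp
  | succ t ih =>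
    have h2 := lam_step_le m n (a + t)
    calc airLam m n (a + (t+1) + 1) = airLam m n (a + t + 2) := by ring_nf
      _ ≤ airLam m n (a + t + 1) := lam_step_le m n (a + t)
      _ ≤ airLam m n (a + 1) := ih

private lemma lam_le_snd (m n t : ℕ) : airLam m n (t+2) ≤ n := by
  have h1 : airLam m n (t+2) ≤ airLam m n 2 := by
    have := lam_anti m n 1 (t+1) (by omega); simpa using this
  have h2 : airLam m n 2 ≤ n := by
    show (if m - n = 0 then 0 else n % (m - n)) ≤ n
    split
    · omega
    · exact Nat.mod_le _ _
  omega

private lemma lam_shift_gen (m1 n1 m2 n2 a b : ℕ)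
    (h0 : airLam m1 n1 a = airLam m2 n2 b)
    (h1 : airLam m1 n1 (a+1) = airLam m2 n2 (b+1)) :
    ∀ t, airLam m1 n1 (a+t) = airLam m2 n2 (b+t) := by
  have key : ∀ t, airLam m1 n1 (a+t) = airLam m2 n2 (b+t) ∧
      airLam m1 n1 (a+t+1) = airLam m2 n2 (b+t+1) := by
    intro t
    induction t with
    | zero => exact ⟨h0, h1⟩
    | succ t ih =>
      refine ⟨ih.2, ?_⟩
      rw [show a + (t+1) + 1 = (a+t) + 2 from by omega, show b + (t+1) + 1 = (b+t) + 2 from by omega]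
      show (if airLam m1 n1 (a+t+1) = 0 then 0 else airLam m1 n1 (a+t) % airLam m1 n1 (a+t+1)) = _
      rw [ih.1, ih.2]
      rfl
  exact fun t => (key t).1

private lemma lam_shift_apply {m1 n1 m2 n2 a b : ℕ}
    (h0 : airLam m1 n1 a = airLam m2 n2 b)
    (h1 : airLam m1 n1 (a+1) = airLam m2 n2 (b+1))
    {u v : ℕ} (hu : a ≤ u) (hv : b ≤ v) (huv : u - a = v - b) :
    airLam m1 n1 u = airLam m2 n2 v := by
  have h := lam_shift_gen m1 n1 m2 n2 a b h0 h1 (u - a)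
  rw [show a + (u - a) = u from by omega, show b + (u - a) = v from by omega] at h
  exact h

private lemma mod_window {n a b : ℕ} (h1 : a < b) (h2 : b - a < n) (h : a % n = b % n) : False := by
  have hd := (Nat.modEq_iff_dvd' h1.le).mp h
  have := Nat.le_of_dvd (by omega) hd
  omega

private lemma mod_low {m n : ℕ} (h : n ≤ m) (h2 : m < 2*n) : m % n = m - n := by
  rw [Nat.mod_eq_sub_mod h, Nat.mod_eq_of_lt (by omega)]

private lemma entry_id {m n j k : ℕ} (hn : n ≠ 0) (hreg : m % n = 0 ∨ j < m - m % n) :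
    airEntry m n j k = if j % n = k then 1 else 0 := by
  rw [airEntry]
  by_cases h0 : m % n = 0
  · simp [hn, h0]
  · simp [hn, h0, hreg.resolve_left h0]

private lemma entry_horiz {m n j k : ℕ} (hn : n ≠ 0) (hr : m % n ≠ 0)
    (hj : m - m % n ≤ j) (hk : k < n - n % (m % n)) :
    airEntry m n j k = if k % (m % n) = j - (m - m % n) then 1 else 0 := by
  rw [airEntry]; simp [hn, hr, Nat.not_lt.mpr hj, hk]

private lemma entry_rec {m n j k : ℕ} (hn : n ≠ 0) (hr : m % n ≠ 0)
    (hj : m - m % n ≤ j) (hk : n - n % (m % n) ≤ k) :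
    airEntry m n j k = airEntry (m % n) (n % (m % n)) (j - (m - m % n)) (k - (n - n % (m % n))) := by
  rw [airEntry]; simp [hn, hr, Nat.not_lt.mpr hj, Nat.not_lt.mpr hk]

private lemma updist_id {m n j k : ℕ} (hn : 1 ≤ n) (hj : n ≤ j)
    (hreg : m % n = 0 ∨ j < m - m % n) (he : airEntry m n j k = 1) :
    IsUpDist m n j k n := by
  have hn' : n ≠ 0 := by omega
  rw [entry_id hn' hreg] at he
  have hk : j % n = k := by by_contra h; simp [h] at he
  refine ⟨by omega, hj, ?_, ?_⟩
  · rw [entry_id hn' (by omega : m % n = 0 ∨ j - n < m - m % n)]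
    have hmm : (j - n) % n = j % n := by
      conv_rhs => rw [show j = (j-n)+n from by omega]
      rw [Nat.add_mod_right]
    rw [hmm, if_pos hk]
  · intro j' h1 h2
    rw [entry_id hn' (by omega : m % n = 0 ∨ j' < m - m % n), if_neg]
    intro h
    exact mod_window h2 (by omega) (h.trans hk.symm)

private lemma T2entry {m n j k : ℕ} (hn : 1 ≤ n) (hm : n < m) (h2 : m < 2*n)
    (hj : n ≤ j) (hk : n - n % (m - n) ≤ k) :
    airEntry m n j k = airEntry (m - n) (n % (m - n)) (j - n) (k - (n - n % (m - n))) := by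
  have hml : m % n = m - n := mod_low (by omega) h2
  rw [airEntry, hml, show m - (m - n) = n from by omega]
  simp [show n ≠ 0 from by omega, show ¬ (m - n = 0) from by omega,
    Nat.not_lt.mpr hj, Nat.not_lt.mpr hk]

private lemma T2updist {m n j' k' v : ℕ} (hn : 1 ≤ n) (hm : n < m) (h2 : m < 2*n)
    (h : IsUpDist (m - n) (n % (m - n)) j' k' v) :
    IsUpDist m n (n + j') (n - n % (m - n) + k') v := by
  obtain ⟨hv, hvj, hent, hzero⟩ := h
  refine ⟨hv, by omega, ?_, ?_⟩
  · rw [T2entry hn hm h2 (by omega) (by omega)]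
    rw [show n + j' - v - n = j' - v from by omega,
        show n - n % (m - n) + k' - (n - n % (m - n)) = k' from by omega]
    exact hent
  · intro j'' hlt1 hlt2
    rw [T2entry hn hm h2 (by omega) (by omega)]
    rw [show n - n % (m - n) + k' - (n - n % (m - n)) = k' from by omega]
    exact hzero (j'' - n) (by omega) (by omega)

private lemma T1entry {m n j k : ℕ} (hn : 1 ≤ n) (h2 : 2*n < m) (hr : m % n ≠ 0)
    (hj : m - n - m % n ≤ j) :
    airEntry m n j k = airEntry (n + m % n) n (j - (m - n - m % n)) k := by
  have hrlt : m % n < n := Nat.mod_lt _ (by omega)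
  have hmod : (n + m % n) % n = m % n := by
    rw [Nat.add_mod_left]; exact Nat.mod_eq_of_lt hrlt
  have hdm := Nat.div_add_mod m n
  have hq2 : 2 ≤ m / n := by
    rw [Nat.le_div_iff_mul_le (show 0 < n from by omega)]; omega
  have hmul : n * 2 ≤ n * (m / n) := Nat.mul_le_mul_left n hq2
  have hdel : m - n - m % n = (m / n - 1) * n := by
    have h3 : (m / n - 1) * n = (m / n) * n - n := by rw [Nat.sub_mul, one_mul]
    have h4 : (m / n) * n = n * (m / n) := Nat.mul_comm _ _
    omega
  have hjm : j % n = (j - (m - n - m % n)) % n := by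
    conv_lhs => rw [show j = (j - (m - n - m % n)) + (m / n - 1) * n from by omega]
    rw [Nat.add_mul_mod_self_right]
  by_cases hb : j < m - m % n
  · have hb' : j - (m - n - m % n) < (n + m % n) - (n + m % n) % n := by rw [hmod]; omega
    rw [entry_id (show n ≠ 0 from by omega) (Or.inr hb),
        entry_id (show n ≠ 0 from by omega) (Or.inr hb'), hjm]
  · by_cases hc : k < n - n % (m % n)
    · have hc' : k < n - n % ((n + m % n) % n) := by rw [hmod]; exact hc
      rw [entry_horiz (show n ≠ 0 from by omega) hr (by omega) hc,
          entry_horiz (show n ≠ 0 from by omega) (by rw [hmod]; exact hr) (by rw [hmod]; omega) hc']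
      rw [hmod, show n + m % n - m % n = n from by omega,
          show j - (m - n - m % n) - n = j - (m - m % n) from by omega]
    · have hc' : ¬ (k < n - n % ((n + m % n) % n)) := by rw [hmod]; exact hc
      rw [entry_rec (show n ≠ 0 from by omega) hr (by omega) (by omega),
          entry_rec (show n ≠ 0 from by omega) (by rw [hmod]; exact hr) (by rw [hmod]; omega)
            (by rw [hmod]; omega)]
      rw [hmod, show n + m % n - m % n = n from by omega,
          show j - (m - n - m % n) - n = j - (m - m % n) from by omega]

private lemma T1updist {m n j' k v : ℕ} (hn : 1 ≤ n) (h2 : 2*n < m) (hr : m % n ≠ 0)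
    (h : IsUpDist (n + m % n) n j' k v) :
    IsUpDist m n (j' + (m - n - m % n)) k v := by
  obtain ⟨hv, hvj, hent, hzero⟩ := h
  refine ⟨hv, by omega, ?_, ?_⟩
  · rw [T1entry hn h2 hr (by omega)]
    rw [show j' + (m - n - m % n) - v - (m - n - m % n) = j' - v from by omega]
    exact hent
  · intro j'' hlt1 hlt2
    rw [T1entry hn h2 hr (by omega)]
    exact hzero (j'' - (m - n - m % n)) (by omega) (by omega)

private lemma A0low {m n j k : ℕ} (hn : 1 ≤ n) (hm : n < m) (h2 : m < 2*n)
    (hs : n % (m - n) ≠ 0)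
    (he : airEntry m n j k = 1) (hj : n ≤ j)
    (hju : j + (m - n) % (n % (m - n)) + 1 ≤ m)
    (hk : n - n % (m - n) ≤ k) (hkn : k < n) :
    IsUpDist m n j k (n % (m - n)) := by
  have hml : m % n = m - n := mod_low (by omega) h2
  have hsltr : n % (m - n) < m - n := Nat.mod_lt _ (by omega)
  have hrs : (m - n) % (n % (m - n)) < n % (m - n) := Nat.mod_lt _ (by omega)
  rw [T2entry hn hm h2 hj hk] at he
  have hjr : j - n < (m - n) - (m - n) % (n % (m - n)) := by omega
  rw [entry_id (show n % (m - n) ≠ 0 from hs) (Or.inr hjr)] at he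
  have hke : (j - n) % (n % (m - n)) = k - (n - n % (m - n)) := by
    by_contra h; simp [h] at he
  refine ⟨by omega, by omega, ?_, ?_⟩
  · by_cases hcase : n + n % (m - n) ≤ j
    · rw [T2entry hn hm h2 (by omega) (by omega)]
      rw [show j - n % (m - n) - n = j - n - n % (m - n) from by omega]
      rw [entry_id hs (Or.inr (by omega : j - n - n % (m - n) < (m - n) - (m - n) % (n % (m - n))))]
      have hmm : (j - n - n % (m - n)) % (n % (m - n)) = (j - n) % (n % (m - n)) := by
        conv_rhs => rw [show j - n = (j - n - n % (m - n)) + n % (m - n) from by omega]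
        rw [Nat.add_mod_right]
      rw [hmm, if_pos hke]
    · have hj' : j - n < n % (m - n) := by omega
      have hmodeq : (j - n) % (n % (m - n)) = j - n := Nat.mod_eq_of_lt hj'
      have hkk : k = j - n % (m - n) := by omega
      rw [entry_id (show n ≠ 0 from by omega) (Or.inr (by omega : j - n % (m - n) < m - m % n))]
      rw [Nat.mod_eq_of_lt (show j - n % (m - n) < n from by omega), if_pos hkk.symm]
  · intro j'' hlt1 hlt2
    by_cases hc2 : n ≤ j''
    · rw [T2entry hn hm h2 hc2 (by omega)]
      rw [entry_id hs (Or.inr (by omega : j'' - n < (m - n) - (m - n) % (n % (m - n)))), if_neg]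
      intro hcon
      exact mod_window (show j'' - n < j - n from by omega)
        (show (j - n) - (j'' - n) < n % (m - n) from by omega) (hcon.trans hke.symm)
    · have hj' : j - n < n % (m - n) := by omega
      have hmodeq : (j - n) % (n % (m - n)) = j - n := Nat.mod_eq_of_lt hj'
      have hkk : k = j - n % (m - n) := by omega
      rw [entry_id (show n ≠ 0 from by omega) (Or.inr (by omega : j'' < m - m % n))]
      rw [Nat.mod_eq_of_lt (show j'' < n from by omega), if_neg (show ¬ j'' = k from by omega)]

private lemma B0low {m n j k c d : ℕ} (hn : 1 ≤ n) (hm : n < m) (h2 : m < 2*n)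
    (he : airEntry m n j k = 1) (hj : n ≤ j) (hjm : j < m)
    (hk : k + n < n + n / (m - n) * (m - n))
    (hd : d < m - n) (heq : k + n = n + c * (m - n) + d) :
    IsUpDist m n j k (n - c * (m - n)) := by
  have hml : m % n = m - n := mod_low (by omega) h2
  have hdm := Nat.div_add_mod n (m - n)
  have hcm : n / (m - n) * (m - n) = (m - n) * (n / (m - n)) := Nat.mul_comm _ _
  have hkns : k < n - n % (m - n) := by omega
  rw [entry_horiz (show n ≠ 0 from by omega) (by omega) (by omega) (by rw [hml]; omega)] at he
  rw [hml, show m - (m - n) = n from by omega] at he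
  have hkr : k % (m - n) = d := by
    rw [show k = c * (m - n) + d from by omega, Nat.add_comm, Nat.add_mul_mod_self_right,
      Nat.mod_eq_of_lt hd]
  have hjd : d = j - n := by
    by_contra h
    rw [hkr, if_neg h] at he
    simp at he
  have hcr : c * (m - n) + d < n := by omega
  refine ⟨by omega, by omega, ?_, ?_⟩
  · rw [show j - (n - c * (m - n)) = c * (m - n) + d from by omega]
    rw [entry_id (show n ≠ 0 from by omega) (Or.inr (by omega : c * (m - n) + d < m - m % n))]
    rw [Nat.mod_eq_of_lt hcr, if_pos (by omega)]
  · intro j'' h1 h2'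
    by_cases hcn : j'' < n
    · rw [entry_id (show n ≠ 0 from by omega) (Or.inr (by omega : j'' < m - m % n))]
      rw [Nat.mod_eq_of_lt hcn, if_neg (by omega)]
    · rw [entry_horiz (show n ≠ 0 from by omega) (by omega) (by omega) (by rw [hml]; omega)]
      rw [hml, show m - (m - n) = n from by omega, hkr, if_neg (by omega)]

private lemma lam_le_snd2 (m n : ℕ) : ∀ t, t ≠ 1 → airLam m n t ≤ n
  | 0, _ => le_refl n
  | 1, h => absurd rfl h
  | t+2, _ => lam_le_snd m n t

private def StA (m n l : ℕ) : Prop :=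
  ∀ i j k : ℕ, 2 * i + 1 ≤ l →
      airEntry m n j k = 1 → n ≤ j →
      m ≤ j + airLam m n (2 * i + 1) → j + airLam m n (2 * i + 3) + 1 ≤ m →
      n ≤ k + airLam m n (2 * i + 2) → k < n →
      IsUpDist m n j k (airLam m n (2 * i + 2))

private def StB (m n l : ℕ) : Prop :=
  ∀ i j k c d : ℕ, 2 * i ≤ l →
      airEntry m n j k = 1 → n ≤ j →
      m ≤ j + airLam m n (2 * i + 1) → j < m →
      n ≤ k + airLam m n (2 * i) →
      k + airLam m n (2 * i) < n + airBeta m n (2 * i) * airLam m n (2 * i + 1) →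
      d < airLam m n (2 * i + 1) →
      k + airLam m n (2 * i) = n + c * airLam m n (2 * i + 1) + d →
      IsUpDist m n j k (airLam m n (2 * i) - c * airLam m n (2 * i + 1))

private lemma air_main : ∀ m n l : ℕ, 1 ≤ n → n < m →
    0 < airLam m n (l + 1) → airLam m n (l + 2) = 0 → StA m n l ∧ StB m n l := by
  intro m
  induction m using Nat.strong_induction_on with
  | _ m IH =>
  intro n l hn hnm hl hl'
  have lam0 : airLam m n 0 = n := rfl
  have lam1 : airLam m n 1 = m - n := rfl
  have lam2' : airLam m n 2 = n % (m - n) := by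
    show (if m - n = 0 then 0 else n % (m - n)) = _
    rw [if_neg (by omega)]
  by_cases hr0 : m % n = 0
  ·
    -- identity stack case: n ∣ m
    obtain ⟨t, rfl⟩ : ∃ t, m = n * t := ⟨m / n, by have := Nat.div_add_mod m n; omega⟩
    have ht2 : 2 ≤ t := by
      by_contra h
      have : n * t ≤ n * 1 := Nat.mul_le_mul_left n (by omega)
      omega
    have hmul : n * 2 ≤ n * t := Nat.mul_le_mul_left n ht2
    by_cases ht : t = 2
    · subst ht
      have hΛ2 : airLam (n*2) n 2 = 0 := by
        rw [lam2', show n*2 - n = n from by omega]; exact Nat.mod_self n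
      have hl0 : l = 0 := by
        by_contra h
        have : airLam (n*2) n (l+1) ≤ airLam (n*2) n 2 := lam_anti _ _ 1 l (by omega)
        omega
      subst hl0
      constructor
      · intro i j k hi
        exact absurd hi (by omega)
      · intro i j k c d hi he hj hjl hjm hk hk2 hd heq
        have hi0 : i = 0 := by omega
        subst hi0
        have hX : airLam (n*2) n (2*0) = n := lam0
        have hY : airLam (n*2) n (2*0+1) = n := by
          show airLam (n*2) n 1 = n
          rw [lam1]; omega
        have hB : airBeta (n*2) n (2*0) = 1 := by
          show airLam (n*2) n 0 / airLam (n*2) n 1 = 1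
          rw [lam0, lam1, show n*2 - n = n from by omega, Nat.div_self (by omega)]
        rw [hX] at heq hk
        rw [hY] at heq hd
        rw [hB, hX, hY] at hk2
        have hc0 : c = 0 := by
          by_contra h
          have h5 := Nat.mul_le_mul_left n (show 1 ≤ c from by omega)
          have h6 : n * c = c * n := Nat.mul_comm _ _
          omega
        rw [show airLam (n*2) n (2*0) - c * airLam (n*2) n (2*0+1) = n from by
          rw [hX, hY, hc0]; omega]
        exact updist_id hn hj (Or.inl hr0) he
    · -- t ≥ 3
      have hmul3 : n * 3 ≤ n * t := Nat.mul_le_mul_left n (by omega)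
      have hΛ2 : airLam (n*t) n 2 = n := by
        rw [lam2']; exact Nat.mod_eq_of_lt (by omega)
      have hΛ3 : airLam (n*t) n 3 = 0 := by
        show (if airLam (n*t) n 2 = 0 then 0 else airLam (n*t) n 1 % airLam (n*t) n 2) = 0
        rw [if_neg (by omega), hΛ2, lam1]
        have ht1 : n * (t-1) + n = n * t := by
          have h7 := Nat.mul_succ n (t-1)
          rw [Nat.succ_eq_add_one, show t - 1 + 1 = t from by omega] at h7
          omega
        rw [show n*t - n = n*(t-1) from by omega]
        exact Nat.mul_mod_right n (t-1)
      have hl1 : l = 1 := by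
        by_contra h
        rcases Nat.lt_or_ge l 1 with h1 | h1
        · have hz : l = 0 := by omega
          subst hz
          have h9 : airLam (n*t) n 2 = 0 := hl'
          omega
        · have h2 : 2 ≤ l := by omega
          have : airLam (n*t) n (l+1) ≤ airLam (n*t) n 3 := lam_anti _ _ 2 l (by omega)
          omega
      subst hl1
      constructor
      · intro i j k hi he hj hjl hju hk hkn
        have hi0 : i = 0 := by omega
        subst hi0
        show IsUpDist (n*t) n j k (airLam (n*t) n 2)
        rw [hΛ2]
        exact updist_id hn hj (Or.inl hr0) he
      · intro i j k c d hi he hj hjl hjm hk hk2 hd heq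
        have hi0 : i = 0 := by omega
        subst hi0
        have hB : airBeta (n*t) n (2*0) = 0 := by
          show airLam (n*t) n 0 / airLam (n*t) n 1 = 0
          rw [lam0, lam1]
          exact Nat.div_eq_of_lt (by omega)
        have hX : airLam (n*t) n (2*0) = n := lam0
        rw [hB, hX] at hk2
        exact absurd hk2 (by omega)
  · by_cases hq : m < 2 * n
    ·
      -- low case: n < m < 2n
      have hml : m % n = m - n := mod_low (by omega) hq
      have hsltr : n % (m - n) < m - n := Nat.mod_lt _ (by omega)
      constructor
      · -- StA
        intro i j k hi he hj hjl hju hk hkn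
        have hlam2p : 0 < airLam m n 2 := by
          have h99 := lam_anti m n 1 l (by omega)
          rw [show (1+1:ℕ) = 2 from rfl] at h99
          omega
        have hs : n % (m - n) ≠ 0 := by rw [lam2'] at hlam2p; omega
        have h3v : airLam m n 3 = (m - n) % (n % (m - n)) := by
          show (if airLam m n 2 = 0 then 0 else airLam m n 1 % airLam m n 2) = _
          rw [if_neg (by omega), lam1, lam2']
        by_cases hi0 : i = 0
        · subst hi0
          have hju' : j + airLam m n 3 + 1 ≤ m := hju
          have hk' : n ≤ k + airLam m n 2 := hk
          rw [h3v] at hju'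
          rw [lam2'] at hk'
          have hk2 : airLam m n 2 ≤ n := lam_le_snd2 m n 2 (by omega)
          show IsUpDist m n j k (airLam m n 2)
          rw [lam2']
          exact A0low hn hnm hq hs he hj hju' (by rw [lam2'] at hk2; omega) hkn
        · obtain ⟨i', rfl⟩ : ∃ i', i = i' + 1 := ⟨i - 1, by omega⟩
          rw [show 2*(i'+1)+1 = 2*i'+3 from by omega] at hjl
          rw [show 2*(i'+1)+3 = 2*i'+5 from by omega] at hju
          rw [show 2*(i'+1)+2 = 2*i'+4 from by omega] at hk ⊢
          have hl3 : 3 ≤ l := by omega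
          have hlam3p : 0 < airLam m n 3 := by
            have h99 := lam_anti m n 2 l (by omega)
            rw [show (2+1:ℕ) = 3 from rfl] at h99
            omega
          rcases Nat.lt_or_ge (m - n) (2 * (n % (m - n))) with hc | hc
          · -- r < 2s : shift by 2
            have sh0 : airLam m n 2 = airLam (m - n) (n % (m - n)) 0 := by rw [lam2']; rfl
            have sh1 : airLam m n 3 = airLam (m - n) (n % (m - n)) 1 := by
              rw [h3v]
              show _ = (m - n) - n % (m - n)
              exact mod_low (by omega) hc
            have e1 : airLam m n (2*i'+3) = airLam (m-n) (n%(m-n)) (2*i'+1) :=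
              lam_shift_apply sh0 sh1 (by omega) (by omega) (by omega)
            have e2 : airLam m n (2*i'+4) = airLam (m-n) (n%(m-n)) (2*i'+2) :=
              lam_shift_apply sh0 sh1 (by omega) (by omega) (by omega)
            have e3 : airLam m n (2*i'+5) = airLam (m-n) (n%(m-n)) (2*i'+3) :=
              lam_shift_apply sh0 sh1 (by omega) (by omega) (by omega)
            have eL1 : airLam m n (l+1) = airLam (m-n) (n%(m-n)) (l-2+1) :=
              lam_shift_apply sh0 sh1 (by omega) (by omega) (by omega)
            have eL2 : airLam m n (l+2) = airLam (m-n) (n%(m-n)) (l-2+2) :=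
              lam_shift_apply sh0 sh1 (by omega) (by omega) (by omega)
            obtain ⟨IA, IB⟩ := IH (m - n) (by omega) (n % (m - n)) (l - 2) (by omega) (by omega)
              (by rw [← eL1]; exact hl) (by rw [← eL2]; exact hl')
            have hanti1 : airLam (m-n) (n%(m-n)) (2*i'+1) ≤ airLam (m-n) (n%(m-n)) 1 :=
              lam_anti _ _ 0 (2*i') (by omega)
            have hin1 : airLam (m-n) (n%(m-n)) 1 = (m-n) - n%(m-n) := rfl
            have hle2 : airLam (m-n) (n%(m-n)) (2*i'+2) ≤ n%(m-n) :=
              lam_le_snd2 _ _ _ (by omega)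
            have hkge : n - n%(m-n) ≤ k := by omega
            rw [T2entry hn hnm hq hj hkge] at he
            have key := IA i' (j - n) (k - (n - n%(m-n))) (by omega) he (by omega) (by omega)
              (by omega) (by omega) (by omega)
            have fin := T2updist hn hnm hq key
            rw [show n + (j - n) = j from by omega,
                show n - n%(m-n) + (k - (n - n%(m-n))) = k from by omega] at fin
            rw [e2]
            exact fin
          · -- r > 2s : shift by 0 (from index 2 on)
            have hrs2 : 0 < (m - n) % (n % (m - n)) := by rw [← h3v]; exact hlam3p
            have hgt : 2 * (n % (m - n)) < m - n := by
              rcases Nat.lt_or_ge (2 * (n%(m-n))) (m-n) with h | h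
              · exact h
              · exfalso
                have h8 : m - n = n % (m - n) * 2 := by omega
                have h9 : (n % (m - n) * 2) % (n % (m - n)) = 0 := Nat.mul_mod_right _ _
                have h10 : (m - n) % (n % (m - n)) = (n % (m - n) * 2) % (n % (m - n)) := by
                  rw [← h8]
                omega
            have sh0 : airLam m n 2 = airLam (m-n) (n%(m-n)) 2 := by
              rw [lam2']
              show _ = (if (m-n) - n%(m-n) = 0 then 0 else (n%(m-n)) % ((m-n) - n%(m-n)))
              rw [if_neg (by omega),
                Nat.mod_eq_of_lt (show n%(m-n) < (m-n) - n%(m-n) from by omega)]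
            have sh1 : airLam m n 3 = airLam (m-n) (n%(m-n)) 3 := by
              rw [h3v]
              show _ = (if airLam (m-n) (n%(m-n)) 2 = 0 then 0
                else airLam (m-n) (n%(m-n)) 1 % airLam (m-n) (n%(m-n)) 2)
              rw [if_neg (by rw [← sh0, lam2']; omega), ← sh0, lam2']
              show (m-n) % (n%(m-n)) = ((m-n) - n%(m-n)) % (n%(m-n))
              exact Nat.mod_eq_sub_mod (by omega)
            have e1 : airLam m n (2*i'+3) = airLam (m-n) (n%(m-n)) (2*(i'+1)+1) :=
              lam_shift_apply sh0 sh1 (by omega) (by omega) (by omega)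
            have e2 : airLam m n (2*i'+4) = airLam (m-n) (n%(m-n)) (2*(i'+1)+2) :=
              lam_shift_apply sh0 sh1 (by omega) (by omega) (by omega)
            have e3 : airLam m n (2*i'+5) = airLam (m-n) (n%(m-n)) (2*(i'+1)+3) :=
              lam_shift_apply sh0 sh1 (by omega) (by omega) (by omega)
            have eL1 : airLam m n (l+1) = airLam (m-n) (n%(m-n)) (l+1) :=
              lam_shift_apply sh0 sh1 (by omega) (by omega) (by omega)
            have eL2 : airLam m n (l+2) = airLam (m-n) (n%(m-n)) (l+2) :=
              lam_shift_apply sh0 sh1 (by omega) (by omega) (by omega)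
            obtain ⟨IA, IB⟩ := IH (m - n) (by omega) (n % (m - n)) l (by omega) (by omega)
              (by rw [← eL1]; exact hl) (by rw [← eL2]; exact hl')
            have hanti1 : airLam (m-n) (n%(m-n)) (2*(i'+1)+1) ≤ airLam (m-n) (n%(m-n)) 1 :=
              lam_anti _ _ 0 (2*(i'+1)) (by omega)
            have hin1 : airLam (m-n) (n%(m-n)) 1 = (m-n) - n%(m-n) := rfl
            have hle2 : airLam (m-n) (n%(m-n)) (2*(i'+1)+2) ≤ n%(m-n) :=
              lam_le_snd2 _ _ _ (by omega)
            have hkge : n - n%(m-n) ≤ k := by omega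
            rw [T2entry hn hnm hq hj hkge] at he
            have key := IA (i'+1) (j - n) (k - (n - n%(m-n))) (by omega) he (by omega)
              (by omega) (by omega) (by omega) (by omega)
            have fin := T2updist hn hnm hq key
            rw [show n + (j - n) = j from by omega,
                show n - n%(m-n) + (k - (n - n%(m-n))) = k from by omega] at fin
            rw [e2]
            exact fin
      · -- StB
        intro i j k c d hi he hj hjl hjm hk hk2 hd heq
        by_cases hi0 : i = 0
        · subst hi0
          have hX : airLam m n (2*0) = n := lam0
          have hY : airLam m n (2*0+1) = m - n := lam1
          have hB : airBeta m n (2*0) = n / (m - n) := by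
            show airLam m n 0 / airLam m n 1 = _
            rw [lam0, lam1]
          rw [hX, hB, hY] at hk2
          rw [hY] at hd
          rw [hX, hY] at heq
          rw [show airLam m n (2*0) - c * airLam m n (2*0+1) = n - c * (m - n) from by
            rw [hX, hY]]
          exact B0low hn hnm hq he hj hjm hk2 hd heq
        · obtain ⟨i', rfl⟩ : ∃ i', i = i' + 1 := ⟨i - 1, by omega⟩
          rw [show 2*(i'+1)+1 = 2*i'+3 from by omega] at hjl hk2 hd heq ⊢
          rw [show 2*(i'+1) = 2*i'+2 from by omega] at hi hk hk2 heq ⊢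
          have hl2 : 2 ≤ l := by omega
          have hlam2p : 0 < airLam m n 2 := by
            have h99 := lam_anti m n 1 l (by omega)
            rw [show (1+1:ℕ) = 2 from rfl] at h99
            omega
          have hs : n % (m - n) ≠ 0 := by rw [lam2'] at hlam2p; omega
          have hlam3p : 0 < airLam m n 3 := by
            have h99 := lam_anti m n 2 l (by omega)
            rw [show (2+1:ℕ) = 3 from rfl] at h99
            omega
          have h3v : airLam m n 3 = (m - n) % (n % (m - n)) := by
            show (if airLam m n 2 = 0 then 0 else airLam m n 1 % airLam m n 2) = _
            rw [if_neg (by omega), lam1, lam2']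
          rcases Nat.lt_or_ge (m - n) (2 * (n % (m - n))) with hc | hc
          · -- r < 2s : shift by 2
            have sh0 : airLam m n 2 = airLam (m - n) (n % (m - n)) 0 := by rw [lam2']; rfl
            have sh1 : airLam m n 3 = airLam (m - n) (n % (m - n)) 1 := by
              rw [h3v]
              show _ = (m - n) - n % (m - n)
              exact mod_low (by omega) hc
            have e0 : airLam m n (2*i'+2) = airLam (m-n) (n%(m-n)) (2*i') :=
              lam_shift_apply sh0 sh1 (by omega) (by omega) (by omega)
            have e1 : airLam m n (2*i'+3) = airLam (m-n) (n%(m-n)) (2*i'+1) :=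
              lam_shift_apply sh0 sh1 (by omega) (by omega) (by omega)
            have eL1 : airLam m n (l+1) = airLam (m-n) (n%(m-n)) (l-2+1) :=
              lam_shift_apply sh0 sh1 (by omega) (by omega) (by omega)
            have eL2 : airLam m n (l+2) = airLam (m-n) (n%(m-n)) (l-2+2) :=
              lam_shift_apply sh0 sh1 (by omega) (by omega) (by omega)
            have eB : airBeta m n (2*i'+2) = airBeta (m-n) (n%(m-n)) (2*i') := by
              show airLam m n (2*i'+2) / airLam m n (2*i'+2+1)
                = airLam (m-n) (n%(m-n)) (2*i') / airLam (m-n) (n%(m-n)) (2*i'+1)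
              rw [show 2*i'+2+1 = 2*i'+3 from by omega, e0, e1]
            obtain ⟨IA, IB⟩ := IH (m - n) (by omega) (n % (m - n)) (l - 2) (by omega) (by omega)
              (by rw [← eL1]; exact hl) (by rw [← eL2]; exact hl')
            have hanti1 : airLam (m-n) (n%(m-n)) (2*i'+1) ≤ airLam (m-n) (n%(m-n)) 1 :=
              lam_anti _ _ 0 (2*i') (by omega)
            have hin1 : airLam (m-n) (n%(m-n)) 1 = (m-n) - n%(m-n) := rfl
            have hle0 : airLam (m-n) (n%(m-n)) (2*i') ≤ n%(m-n) :=
              lam_le_snd2 _ _ _ (by omega)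
            have hkge : n - n%(m-n) ≤ k := by omega
            rw [T2entry hn hnm hq hj hkge] at he
            rw [e0, e1, eB] at hk2
            rw [e1] at hd
            rw [e0, e1] at heq
            rw [e0] at hk
            have key := IB i' (j - n) (k - (n - n%(m-n))) c d (by omega) he (by omega)
              (by omega) (by omega) (by omega) (by omega) (by omega) (by omega)
            have fin := T2updist hn hnm hq key
            rw [show n + (j - n) = j from by omega,
                show n - n%(m-n) + (k - (n - n%(m-n))) = k from by omega] at fin
            rw [e0, e1]
            exact fin
          · -- r > 2s
            have hrs2 : 0 < (m - n) % (n % (m - n)) := by rw [← h3v]; exact hlam3p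
            have hgt : 2 * (n % (m - n)) < m - n := by
              rcases Nat.lt_or_ge (2 * (n%(m-n))) (m-n) with h | h
              · exact h
              · exfalso
                have h8 : m - n = n % (m - n) * 2 := by omega
                have h9 : (n % (m - n) * 2) % (n % (m - n)) = 0 := Nat.mul_mod_right _ _
                have h10 : (m - n) % (n % (m - n)) = (n % (m - n) * 2) % (n % (m - n)) := by
                  rw [← h8]
                omega
            have sh0 : airLam m n 2 = airLam (m-n) (n%(m-n)) 2 := by
              rw [lam2']
              show _ = (if (m-n) - n%(m-n) = 0 then 0 else (n%(m-n)) % ((m-n) - n%(m-n)))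
              rw [if_neg (by omega),
                Nat.mod_eq_of_lt (show n%(m-n) < (m-n) - n%(m-n) from by omega)]
            have sh1 : airLam m n 3 = airLam (m-n) (n%(m-n)) 3 := by
              rw [h3v]
              show _ = (if airLam (m-n) (n%(m-n)) 2 = 0 then 0
                else airLam (m-n) (n%(m-n)) 1 % airLam (m-n) (n%(m-n)) 2)
              rw [if_neg (by rw [← sh0, lam2']; omega), ← sh0, lam2']
              show (m-n) % (n%(m-n)) = ((m-n) - n%(m-n)) % (n%(m-n))
              exact Nat.mod_eq_sub_mod (by omega)
            have e0 : airLam m n (2*i'+2) = airLam (m-n) (n%(m-n)) (2*(i'+1)) :=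
              lam_shift_apply sh0 sh1 (by omega) (by omega) (by omega)
            have e1 : airLam m n (2*i'+3) = airLam (m-n) (n%(m-n)) (2*(i'+1)+1) :=
              lam_shift_apply sh0 sh1 (by omega) (by omega) (by omega)
            have eL1 : airLam m n (l+1) = airLam (m-n) (n%(m-n)) (l+1) :=
              lam_shift_apply sh0 sh1 (by omega) (by omega) (by omega)
            have eL2 : airLam m n (l+2) = airLam (m-n) (n%(m-n)) (l+2) :=
              lam_shift_apply sh0 sh1 (by omega) (by omega) (by omega)
            have eB : airBeta m n (2*i'+2) = airBeta (m-n) (n%(m-n)) (2*(i'+1)) := by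
              show airLam m n (2*i'+2) / airLam m n (2*i'+2+1)
                = airLam (m-n) (n%(m-n)) (2*(i'+1)) / airLam (m-n) (n%(m-n)) (2*(i'+1)+1)
              rw [show 2*i'+2+1 = 2*i'+3 from by omega, e0, e1]
            obtain ⟨IA, IB⟩ := IH (m - n) (by omega) (n % (m - n)) l (by omega) (by omega)
              (by rw [← eL1]; exact hl) (by rw [← eL2]; exact hl')
            have hanti1 : airLam (m-n) (n%(m-n)) (2*(i'+1)+1) ≤ airLam (m-n) (n%(m-n)) 1 :=
              lam_anti _ _ 0 (2*(i'+1)) (by omega)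
            have hin1 : airLam (m-n) (n%(m-n)) 1 = (m-n) - n%(m-n) := rfl
            have hle0 : airLam (m-n) (n%(m-n)) (2*(i'+1)) ≤ n%(m-n) :=
              lam_le_snd2 _ _ _ (by omega)
            have hkge : n - n%(m-n) ≤ k := by omega
            rw [T2entry hn hnm hq hj hkge] at he
            rw [e0, e1, eB] at hk2
            rw [e1] at hd
            rw [e0, e1] at heq
            rw [e0] at hk
            have key := IB (i'+1) (j - n) (k - (n - n%(m-n))) c d (by omega) he (by omega)
              (by omega) (by omega) (by omega) (by omega) (by omega) (by omega)
            have fin := T2updist hn hnm hq key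
            rw [show n + (j - n) = j from by omega,
                show n - n%(m-n) + (k - (n - n%(m-n))) = k from by omega] at fin
            rw [e0, e1]
            exact fin
    ·
      -- high case: 2n < m
      have h2n : 2*n < m := by
        rcases Nat.lt_or_ge (2*n) m with h | h
        · exact h
        · exfalso
          apply hr0
          have h8 : m = n * 2 := by omega
          rw [h8]
          exact Nat.mul_mod_right n 2
      have hrlt : m % n < n := Nat.mod_lt _ (by omega)
      have hL2n : airLam m n 2 = n := by
        rw [lam2']; exact Nat.mod_eq_of_lt (by omega)
      have h3v' : airLam m n 3 = m % n := by
        show (if airLam m n 2 = 0 then 0 else airLam m n 1 % airLam m n 2) = m % n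
        rw [if_neg (by omega), hL2n, lam1]
        exact (Nat.mod_eq_sub_mod (by omega)).symm
      have sh0 : airLam m n 2 = airLam (n + m % n) n 0 := by rw [hL2n]; rfl
      have sh1 : airLam m n 3 = airLam (n + m % n) n 1 := by
        rw [h3v']
        show m % n = n + m % n - n
        omega
      constructor
      · intro i j k hi he hj hjl hju hk hkn
        by_cases hi0 : i = 0
        · subst hi0
          have hZ : airLam m n (2*0+3) = m % n := h3v'
          rw [hZ] at hju
          show IsUpDist m n j k (airLam m n 2)
          rw [hL2n]
          exact updist_id hn hj (Or.inr (by omega)) he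
        · obtain ⟨i', rfl⟩ : ∃ i', i = i' + 1 := ⟨i - 1, by omega⟩
          rw [show 2*(i'+1)+1 = 2*i'+3 from by omega] at hjl
          rw [show 2*(i'+1)+3 = 2*i'+5 from by omega] at hju
          rw [show 2*(i'+1)+2 = 2*i'+4 from by omega] at hk ⊢
          have hl3 : 3 ≤ l := by omega
          have e1 : airLam m n (2*i'+3) = airLam (n + m%n) n (2*i'+1) :=
            lam_shift_apply sh0 sh1 (by omega) (by omega) (by omega)
          have e2 : airLam m n (2*i'+4) = airLam (n + m%n) n (2*i'+2) :=
            lam_shift_apply sh0 sh1 (by omega) (by omega) (by omega)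
          have e3 : airLam m n (2*i'+5) = airLam (n + m%n) n (2*i'+3) :=
            lam_shift_apply sh0 sh1 (by omega) (by omega) (by omega)
          have eL1 : airLam m n (l+1) = airLam (n + m%n) n (l-2+1) :=
            lam_shift_apply sh0 sh1 (by omega) (by omega) (by omega)
          have eL2 : airLam m n (l+2) = airLam (n + m%n) n (l-2+2) :=
            lam_shift_apply sh0 sh1 (by omega) (by omega) (by omega)
          obtain ⟨IA, IB⟩ := IH (n + m%n) (by omega) n (l-2) (by omega) (by omega)
            (by rw [← eL1]; exact hl) (by rw [← eL2]; exact hl')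
          have hanti3 : airLam m n (2*i'+3) ≤ airLam m n 3 :=
            lam_anti m n 2 (2*i'+2) (by omega)
          have hjge : m - m % n ≤ j := by omega
          rw [T1entry hn h2n hr0 (by omega)] at he
          have key := IA i' (j - (m - n - m%n)) k (by omega) he (by omega) (by omega)
            (by omega) (by omega) hkn
          have fin := T1updist hn h2n hr0 key
          rw [show j - (m - n - m%n) + (m - n - m%n) = j from by omega] at fin
          rw [e2]
          exact fin
      · intro i j k c d hi he hj hjl hjm hk hk2 hd heq
        by_cases hi0 : i = 0
        · subst hi0
          have hB : airBeta m n (2*0) = 0 := by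
            show airLam m n 0 / airLam m n 1 = 0
            rw [lam0, lam1]
            exact Nat.div_eq_of_lt (by omega)
          have hX : airLam m n (2*0) = n := lam0
          rw [hB, hX] at hk2
          exact absurd hk2 (by omega)
        · obtain ⟨i', rfl⟩ : ∃ i', i = i' + 1 := ⟨i - 1, by omega⟩
          rw [show 2*(i'+1)+1 = 2*i'+3 from by omega] at hjl hk2 hd heq ⊢
          rw [show 2*(i'+1) = 2*i'+2 from by omega] at hi hk hk2 heq ⊢
          have hl2 : 2 ≤ l := by omega
          have e0 : airLam m n (2*i'+2) = airLam (n + m%n) n (2*i') :=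
            lam_shift_apply sh0 sh1 (by omega) (by omega) (by omega)
          have e1 : airLam m n (2*i'+3) = airLam (n + m%n) n (2*i'+1) :=
            lam_shift_apply sh0 sh1 (by omega) (by omega) (by omega)
          have eL1 : airLam m n (l+1) = airLam (n + m%n) n (l-2+1) :=
            lam_shift_apply sh0 sh1 (by omega) (by omega) (by omega)
          have eL2 : airLam m n (l+2) = airLam (n + m%n) n (l-2+2) :=
            lam_shift_apply sh0 sh1 (by omega) (by omega) (by omega)
          have eB : airBeta m n (2*i'+2) = airBeta (n + m%n) n (2*i') := by
            show airLam m n (2*i'+2) / airLam m n (2*i'+2+1)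
              = airLam (n + m%n) n (2*i') / airLam (n + m%n) n (2*i'+1)
            rw [show 2*i'+2+1 = 2*i'+3 from by omega, e0, e1]
          obtain ⟨IA, IB⟩ := IH (n + m%n) (by omega) n (l-2) (by omega) (by omega)
            (by rw [← eL1]; exact hl) (by rw [← eL2]; exact hl')
          have hanti3 : airLam m n (2*i'+3) ≤ airLam m n 3 :=
            lam_anti m n 2 (2*i'+2) (by omega)
          have hjge : m - m % n ≤ j := by omega
          rw [T1entry hn h2n hr0 (by omega)] at he
          rw [e0, e1, eB] at hk2
          rw [e1] at hd
          rw [e0, e1] at heq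
          rw [e0] at hk
          have key := IB i' (j - (m - n - m%n)) k c d (by omega) he (by omega)
            (by omega) (by omega) (by omega) (by omega) (by omega) (by omega)
          have fin := T1updist hn h2n hr0 key
          rw [show j - (m - n - m%n) + (m - n - m%n) = j from by omega] at fin
          rw [e0, e1]
          exact fin


/-- Up-distances in the `m × n` AIR matrix (with `λ_i = airLam m n (i+1)`,
`β_i = airBeta m n i`, `l` the largest index with `λ_l > 0`), for a position `(j,k)` with
`L(j,k) = 1` and `j ≥ n`:
(a) if `(j,k)` lies in the odd-indexed block `I_{β_{2i+1}λ_{2i+1}×λ_{2i+1}}`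
(rows `m-λ_{2i} … m-λ_{2i+2}-1`, columns `n-λ_{2i+1} … n-1`) then `d_up(j,k) = λ_{2i+1}`;
(b) if `(j,k)` lies in the even-indexed block `I_{λ_{2i}×β_{2i}λ_{2i}}`
(rows `m-λ_{2i} … m-1`, columns `n-λ_{2i-1} … n-λ_{2i-1}+β_{2i}λ_{2i}-1`) and the local
column index `k_R = k - (n-λ_{2i-1})` is `c·λ_{2i} + d` with `0 ≤ d < λ_{2i}`, then
`d_up(j,k) = λ_{2i-1} - c·λ_{2i}`. -/
theorem air_up_distance (m n : ℕ) (hn : 1 ≤ n) (hnm : n < m)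
    (l : ℕ) (hl : 0 < airLam m n (l + 1)) (hl' : airLam m n (l + 2) = 0) :
    (∀ i j k : ℕ, 2 * i + 1 ≤ l →
      airEntry m n j k = 1 → n ≤ j →
      m ≤ j + airLam m n (2 * i + 1) → j + airLam m n (2 * i + 3) + 1 ≤ m →
      n ≤ k + airLam m n (2 * i + 2) → k < n →
      IsUpDist m n j k (airLam m n (2 * i + 2))) ∧
    (∀ i j k c d : ℕ, 2 * i ≤ l →
      airEntry m n j k = 1 → n ≤ j →
      m ≤ j + airLam m n (2 * i + 1) → j < m →
      n ≤ k + airLam m n (2 * i) →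
      k + airLam m n (2 * i) < n + airBeta m n (2 * i) * airLam m n (2 * i + 1) →
      d < airLam m n (2 * i + 1) →
      k + airLam m n (2 * i) = n + c * airLam m n (2 * i + 1) + d →
      IsUpDist m n j k (airLam m n (2 * i) - c * airLam m n (2 * i + 1))) := by
  exact air_main m n l hn hnm hl hl'
end

section
/- Let m > n ≥ 1 be integers and let L be the AIR matrix of size m × n with Euclidean data λ_i, β_i, l. Let (j,k) be a position with L(j,k) = 1 lying in the even-indexed block I_{λ_{2i}×β_{2i}λ_{2i}} (rows m−λ_{2i},…,m−1, columns n−λ_{2i−1},…,n−λ_{2i−1}+β_{2i}λ_{2i}−1), with local indices j_R = j − (m−λ_{2i}) and k_R = k − (n−λ_{2i−1}). (a) If 0 ≤ k_R ≤ (β_{2i}−1)λ_{2i} − 1, then the right-distance satisfies d_right(j,k) = λ_{2i}. (b) If (β_{2i}−1)λ_{2i} ≤ k_R ≤ β_{2i}λ_{2i} − 1 and 0 ≤ i ≤ ⌊l/2⌋ − 1, then, writing j_R = c·λ_{2i+1} + d with 0 ≤ d < λ_{2i+1}, d_right(j,k) = λ_{2i} − c·λ_{2i+1}. -/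
/-! With `r = m % n`, the last `r` rows of the `m × n` AIR matrix carry copies of `I_r` side by
side in their first `n - n % r` columns, followed by the `r × (n % r)` AIR matrix. Up to an even
shift of the index, the Euclidean data of `(m, n)` continue as those of `(r, n % r)`, so every
even-indexed block is either empty of admissible positions (`λ_{2i} = 0` or
`λ_{2i-1} ≤ λ_{2i}`), or the block of copies of `I_r`, or an even-indexed block of the corner
matrix, and induction on `n` reduces everything to the copies of `I_r`. There the next `1` of a
row lies `r` columns further, except in the last copy, where it is the first `1` of the same
row of the corner matrix, in column `j_R % (n % r)`. -/
set_option linter.unusedVariables false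

/-- `IsRightDist m n j k v` says that the right-distance of the entry `L(j,k)` of the
`m × n` AIR matrix equals `v`: `k + v` is the smallest column index `k' > k` with
`L(j,k') = 1`. -/
def IsRightDist (m n j k v : ℕ) : Prop :=
  0 < v ∧ k + v < n ∧ airEntry m n j (k + v) = 1 ∧
    ∀ k' : ℕ, k < k' → k' < k + v → airEntry m n j k' = 0

lemma Nat.eq_of_mod_eq_of_lt_add {a b n : ℕ} (h : a % n = b % n) (hab : a < b + n)
    (hba : b < a + n) : a = b := by
  rcases lt_trichotomy a b with hlt | heq | hgt
  · have h0 := Nat.sub_mod_eq_zero_of_mod_eq h.symm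
    rw [Nat.mod_eq_of_lt (by omega)] at h0
    omega
  · exact heq
  · have h0 := Nat.sub_mod_eq_zero_of_mod_eq h
    rw [Nat.mod_eq_of_lt (by omega)] at h0
    omega

lemma Nat.le_sub_mod_of_le {a b : ℕ} (ha : 0 < a) (hab : a ≤ b) : a ≤ b - b % a :=
  Nat.le_of_dvd (by have := Nat.mod_lt b ha; omega) (Nat.dvd_sub_mod b)

section Euclid

variable {m n : ℕ}

lemma airLam_add_two_of_eq_zero {t : ℕ} (h : airLam m n (t + 1) = 0) :
    airLam m n (t + 2) = 0 := by
  rw [airLam, if_pos h]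

lemma airLam_add_two_of_ne_zero {t : ℕ} (h : airLam m n (t + 1) ≠ 0) :
    airLam m n (t + 2) = airLam m n t % airLam m n (t + 1) := by
  rw [airLam, if_neg h]

lemma airLam_eq_zero_of_le {u v : ℕ} (hu : 0 < u) (huv : u ≤ v) (h : airLam m n u = 0) :
    airLam m n v = 0 := by
  induction v, huv using Nat.le_induction with
  | base => exact h
  | succ v huv ih =>
    obtain ⟨w, rfl⟩ : ∃ w, v = w + 1 := ⟨v - 1, by omega⟩
    exact airLam_add_two_of_eq_zero ih

lemma airLam_add_two_le (t : ℕ) : airLam m n (t + 2) ≤ airLam m n t := by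
  by_cases h : airLam m n (t + 1) = 0
  · simp [airLam_add_two_of_eq_zero h]
  · rw [airLam_add_two_of_ne_zero h]
    exact Nat.mod_le _ _

lemma airLam_two_mul_le (s : ℕ) : airLam m n (2 * s) ≤ n := by
  induction s with
  | zero => exact le_rfl
  | succ s ih => exact (airLam_add_two_le (2 * s)).trans ih

lemma airLam_two_mul_add_one_le (s : ℕ) : airLam m n (2 * s + 1) ≤ m - n := by
  induction s with
  | zero => exact le_rfl
  | succ s ih => exact (airLam_add_two_le (2 * s + 1)).trans ih

lemma airLam_add_eq_of_eq {m' n' p q : ℕ} (h₀ : airLam m n p = airLam m' n' q)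
    (h₁ : airLam m n (p + 1) = airLam m' n' (q + 1)) (t : ℕ) :
    airLam m n (p + t) = airLam m' n' (q + t) := by
  induction t using Nat.twoStepInduction with
  | zero => exact h₀
  | one => exact h₁
  | more t ih₀ ih₁ =>
    rw [← add_assoc, ← add_assoc] at ih₁ ⊢
    rw [airLam, airLam, ih₀, ih₁]

lemma exists_airLam_eq_mod (hn : 0 < n) (hnm : n < m) (hm : m ≠ 2 * n) :
    ∃ e, airLam m n (2 * e) = n ∧ airLam m n (2 * e + 1) = m % n ∧
      ∀ t < e, airLam m n (2 * t) ≤ airLam m n (2 * t + 1) := by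
  rcases lt_or_gt_of_ne hm with hm | hm
  · refine ⟨0, rfl, ?_, by simp⟩
    show m - n = m % n
    rw [Nat.mod_eq_sub_mod hnm.le, Nat.mod_eq_of_lt (by omega)]
  · have h₂ : airLam m n 2 = n := by
      rw [airLam_add_two_of_ne_zero (t := 0) (show m - n ≠ 0 by omega)]
      exact Nat.mod_eq_of_lt (show n < m - n by omega)
    refine ⟨1, h₂, ?_, fun t ht => ?_⟩
    · rw [airLam_add_two_of_ne_zero (t := 1) (show airLam m n 2 ≠ 0 by omega), h₂]
      exact (Nat.mod_eq_sub_mod hnm.le).symm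
    · obtain rfl : t = 0 := by omega
      show n ≤ m - n
      omega

lemma airLam_evenPair_cases (hn : 0 < n) (t : ℕ) :
    airLam m n (2 * t + 1) = 0 ∨ airLam m n (2 * t) ≤ airLam m n (2 * t + 1) ∨
      (airLam m n (2 * t) = n ∧ airLam m n (2 * t + 1) = m % n) ∨
      (m % n ≠ 0 ∧ ∃ s, airLam m n (2 * t) = airLam (m % n) (n % (m % n)) (2 * s) ∧
        airLam m n (2 * t + 1) = airLam (m % n) (n % (m % n)) (2 * s + 1)) := by
  have zero_of_le {u : ℕ} (hu : 0 < u) (hut : u ≤ 2 * t + 1) (h : airLam m n u = 0) :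
      airLam m n (2 * t + 1) = 0 := airLam_eq_zero_of_le hu hut h
  by_cases hnm : m ≤ n
  · exact Or.inl (zero_of_le one_pos (by omega) (show m - n = 0 by omega))
  by_cases hm : m = 2 * n
  · rcases Nat.eq_zero_or_pos t with rfl | ht
    · exact Or.inr (Or.inl (show n ≤ m - n by omega))
    · refine Or.inl (zero_of_le two_pos (by omega) ?_)
      have h₂ : airLam m n 2 = n % (m - n) :=
        airLam_add_two_of_ne_zero (t := 0) (show m - n ≠ 0 by omega)
      rw [h₂, show m - n = n by omega, Nat.mod_self]
  obtain ⟨e, hne, hre, hlt⟩ := exists_airLam_eq_mod hn (by omega) hm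
  rcases lt_trichotomy t e with hte | rfl | hte
  · exact Or.inr (Or.inl (hlt t hte))
  · exact Or.inr (Or.inr (Or.inl ⟨hne, hre⟩))
  set r := m % n
  set n' := n % r
  by_cases hr : r = 0
  · exact Or.inl (zero_of_le (by omega) (by omega) (hre.trans hr))
  have hne₂ : airLam m n (2 * e + 2) = n' := by
    rw [airLam_add_two_of_ne_zero (hre ▸ hr), hne, hre]
  by_cases hn' : n' = 0
  · exact Or.inl (zero_of_le (by omega) (by omega) (hne₂.trans hn'))
  have hre₂ : airLam m n (2 * e + 3) = r % n' := by
    rw [airLam_add_two_of_ne_zero (t := 2 * e + 1) (hne₂ ▸ hn'), hne₂, hre]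
  by_cases hr' : r % n' = 0
  · exact Or.inl (zero_of_le (by omega) (by omega) (hre₂.trans hr'))
  have hn'r : n' < r := Nat.mod_lt _ (Nat.pos_of_ne_zero hr)
  obtain ⟨e', hne', hre', -⟩ := exists_airLam_eq_mod (Nat.pos_of_ne_zero hn') hn'r
    (fun h => hr' (by simp [h]))
  have htail := airLam_add_eq_of_eq (hne₂.trans hne'.symm) (hre₂.trans hre'.symm)
  refine Or.inr (Or.inr (Or.inr ⟨hr, e' + (t - e - 1), ?_, ?_⟩))
  · simpa [show 2 * e + 2 + 2 * (t - e - 1) = 2 * t by omega, mul_add] using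
      htail (2 * (t - e - 1))
  · simpa [show 2 * e + 2 + (2 * (t - e - 1) + 1) = 2 * t + 1 by omega, mul_add, add_assoc] using
      htail (2 * (t - e - 1) + 1)

end Euclid

section Entry

variable {m n j k : ℕ}

lemma airEntry_zero_right : airEntry m 0 j k = 0 := by
  rw [airEntry, dif_pos rfl]

lemma airEntry_of_lt_sub_mod (hn : n ≠ 0) (hj : j < m - m % n) :
    airEntry m n j k = if j % n = k then 1 else 0 := by
  rw [airEntry]
  by_cases hr : m % n = 0 <;> simp [hn, hr, hj]

lemma airEntry_bottomLeft (hn : n ≠ 0) (hr : m % n ≠ 0) (hj : m - m % n ≤ j)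
    (hk : k < n - n % (m % n)) :
    airEntry m n j k = if k % (m % n) = j - (m - m % n) then 1 else 0 := by
  rw [airEntry]
  simp [hn, hr, hk, Nat.not_lt.mpr hj]

lemma airEntry_bottomRight (hn : n ≠ 0) (hr : m % n ≠ 0) (hj : m - m % n ≤ j)
    (hk : n - n % (m % n) ≤ k) :
    airEntry m n j k =
      airEntry (m % n) (n % (m % n)) (j - (m - m % n)) (k - (n - n % (m % n))) := by
  rw [airEntry]
  simp [hn, hr, Nat.not_lt.mpr hj, Nat.not_lt.mpr hk]

lemma mod_eq_of_airEntry_bottomLeft_eq_one (hn : n ≠ 0) (hr : m % n ≠ 0)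
    (hj : m - m % n ≤ j) (hk : k < n - n % (m % n)) (h : airEntry m n j k = 1) :
    k % (m % n) = j - (m - m % n) := by
  rw [airEntry_bottomLeft hn hr hj hk] at h
  by_contra hne
  simp [hne] at h

/-- The first `1` in row `j` sits in column `j % n`. -/
lemma airEntry_of_le_mod (hn : n ≠ 0) (hj : j < m) (hk : k ≤ j % n) :
    airEntry m n j k = if j % n = k then 1 else 0 := by
  by_cases hr : m % n = 0
  · rw [airEntry, dif_neg hn, dif_pos hr]
  by_cases hjt : j < m - m % n
  · exact airEntry_of_lt_sub_mod hn hjt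
  have hmn : m % n + n * (m / n) = m := Nat.mod_add_div m n
  have hrn : m % n < n := Nat.mod_lt _ (Nat.pos_of_ne_zero hn)
  have hjn : j % n = j - (m - m % n) := by
    rw [← Nat.sub_mul_mod (show n * (m / n) ≤ j by omega), Nat.mod_eq_of_lt (by omega)]
    omega
  have hcols : m % n ≤ n - n % (m % n) := Nat.le_sub_mod_of_le (Nat.pos_of_ne_zero hr) hrn.le
  rw [airEntry_bottomLeft hn hr (by omega) (by omega), Nat.mod_eq_of_lt (by omega), hjn]
  simp only [eq_comm]

end Entry

lemma IsRightDist.of_mod {m n j k v : ℕ} (hn : n ≠ 0) (hr : m % n ≠ 0)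
    (hj : m - m % n ≤ j) (hk : n - n % (m % n) ≤ k)
    (h : IsRightDist (m % n) (n % (m % n)) (j - (m - m % n)) (k - (n - n % (m % n))) v) :
    IsRightDist m n j k v := by
  obtain ⟨hv, hlt, hone, hzero⟩ := h
  have hn' : n % (m % n) ≤ n := Nat.mod_le _ _
  refine ⟨hv, by omega, ?_, fun k' hk₁ hk₂ => ?_⟩
  · rw [airEntry_bottomRight hn hr hj (by omega), Nat.sub_add_comm hk]
    exact hone
  · rw [airEntry_bottomRight hn hr hj (by omega)]
    exact hzero _ (by omega) (by omega)

/-- Right-distances inside the even-indexed block of the `m × n` AIR matrix with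
`A = λ_{2i-1}` and `B = λ_{2i}`: the block `I_{B × (A/B)B}` in rows `m-B … m-1` and columns
`n-A … n-A+(A/B)B-1`, where `λ_{2i+1} = A % B`. -/
def EvenBlockRightDist (m n A B : ℕ) : Prop :=
  (∀ j k, airEntry m n j k = 1 → m ≤ j + B → j < m → n ≤ k + A →
      k + A < n + (A / B - 1) * B → IsRightDist m n j k B) ∧
  (∀ j k c d, airEntry m n j k = 1 → m ≤ j + B → j < m →
      n + (A / B - 1) * B ≤ k + A → k + A < n + A / B * B →
      d < A % B → j + B = m + c * (A % B) + d → IsRightDist m n j k (B - c * (A % B)))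

namespace EvenBlockRightDist

variable {m n A B : ℕ}

lemma width_zero (m A B : ℕ) : EvenBlockRightDist m 0 A B := by
  constructor <;> intros <;> simp_all [airEntry_zero_right]

lemma height_zero (m n A : ℕ) : EvenBlockRightDist m n A 0 := by
  constructor <;> intros <;> omega

lemma of_le (h : A ≤ B) : EvenBlockRightDist m n A B := by
  have hq : A / B ≤ 1 := Nat.div_le_of_le_mul (by omega)
  constructor
  · intro j k _ _ _ h₁ h₂
    rw [show A / B - 1 = 0 by omega] at h₂
    omega
  · intro j k c d _ _ _ h₁ h₂ hd
    rcases Nat.lt_or_ge A B with hAB | hAB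
    · rw [Nat.div_eq_of_lt hAB] at h₂
      omega
    · rw [show A = B by omega, Nat.mod_self] at hd
      omega

lemma of_mod (hn : n ≠ 0) (hr : m % n ≠ 0) (hA : A ≤ n % (m % n)) (hB : B ≤ m % n)
    (h : EvenBlockRightDist (m % n) (n % (m % n)) A B) : EvenBlockRightDist m n A B := by
  have hrm : m % n ≤ m := Nat.mod_le _ _
  have hn'n : n % (m % n) ≤ n := Nat.mod_le _ _
  have entry {j k : ℕ} (hj : m ≤ j + B) (hk : n ≤ k + A) (he : airEntry m n j k = 1) :
      airEntry (m % n) (n % (m % n)) (j - (m - m % n)) (k - (n - n % (m % n))) = 1 := by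
    rwa [← airEntry_bottomRight hn hr (by omega) (by omega)]
  constructor
  · intro j k he hj₁ hj₂ hk₁ hk₂
    exact IsRightDist.of_mod hn hr (by omega) (by omega)
      (h.1 _ _ (entry hj₁ hk₁ he) (by omega) (by omega) (by omega) (by omega))
  · intro j k c d he hj₁ hj₂ hk₁ hk₂ hd hjc
    exact IsRightDist.of_mod hn hr (by omega) (by omega)
      (h.2 _ _ c d (entry hj₁ (by omega) he) (by omega) (by omega) (by omega) (by omega) hd
        (by omega))

end EvenBlockRightDist

section BottomLeft

variable {m n j k : ℕ}

lemma isRightDist_bottomLeft (hn : n ≠ 0) (hr : m % n ≠ 0) (hj : m ≤ j + m % n)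
    (hk : k + m % n < n - n % (m % n)) (he : airEntry m n j k = 1) :
    IsRightDist m n j k (m % n) := by
  have hjk := mod_eq_of_airEntry_bottomLeft_eq_one hn hr (by omega) (by omega) he
  refine ⟨Nat.pos_of_ne_zero hr, by omega, ?_, fun k' hk₁ hk₂ => ?_⟩
  · rw [airEntry_bottomLeft hn hr (by omega) hk, Nat.add_mod_right, if_pos hjk]
  · rw [airEntry_bottomLeft hn hr (by omega) (by omega), if_neg]
    intro hk'
    have := Nat.eq_of_mod_eq_of_lt_add (hk'.trans hjk.symm) (by omega) (by omega)
    omega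

lemma isRightDist_bottomLeft_last {c d : ℕ} (hn : n ≠ 0) (hr : m % n ≠ 0)
    (hj₁ : m ≤ j + m % n) (hj₂ : j < m) (hk₁ : n - n % (m % n) ≤ k + m % n)
    (hk₂ : k < n - n % (m % n)) (hd : d < n % (m % n))
    (hjc : j + m % n = m + c * (n % (m % n)) + d) (he : airEntry m n j k = 1) :
    IsRightDist m n j k (m % n - c * (n % (m % n))) := by
  have hjk := mod_eq_of_airEntry_bottomLeft_eq_one hn hr (by omega) hk₂ he
  have hrm : m % n ≤ m := Nat.mod_le _ _
  have hrn : m % n < n := Nat.mod_lt _ (Nat.pos_of_ne_zero hn)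
  have hcols : m % n ≤ n - n % (m % n) := Nat.le_sub_mod_of_le (Nat.pos_of_ne_zero hr) hrn.le
  -- `k` lies in the last copy of `I_{m % n}`
  have hk : k = n - n % (m % n) - m % n + (j - (m - m % n)) := by
    have hdvd : m % n ∣ n - n % (m % n) - m % n := Nat.dvd_sub (Nat.dvd_sub_mod n) dvd_rfl
    refine Nat.eq_of_mod_eq_of_lt_add (n := m % n) ?_ (by omega) (by omega)
    rw [hjk, Nat.add_mod, (Nat.dvd_iff_mod_eq_zero).1 hdvd, zero_add, Nat.mod_mod,
      Nat.mod_eq_of_lt (show j - (m - m % n) < m % n by omega)]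
  have hsub {k' : ℕ} := airEntry_of_le_mod (k := k')
    (show n % (m % n) ≠ 0 by omega) (show j - (m - m % n) < m % n by omega)
  have hjd : (j - (m - m % n)) % (n % (m % n)) = d := by
    rw [show j - (m - m % n) = d + c * (n % (m % n)) by omega, Nat.add_mul_mod_self_right,
      Nat.mod_eq_of_lt hd]
  refine ⟨?_, ?_, ?_, fun k' hk₁ hk₂ => ?_⟩
  · omega
  · omega
  · rw [airEntry_bottomRight hn hr (by omega) (by omega),
      show k + (m % n - c * (n % (m % n))) - (n - n % (m % n)) = d by omega, hsub (by omega),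
      if_pos hjd]
  · by_cases hk' : k' < n - n % (m % n)
    · rw [airEntry_bottomLeft hn hr (by omega) hk', if_neg]
      intro hk'
      have := Nat.eq_of_mod_eq_of_lt_add (hk'.trans hjk.symm) (by omega) (by omega)
      omega
    · rw [airEntry_bottomRight hn hr (by omega) (by omega), hsub (by omega), if_neg]
      omega

lemma EvenBlockRightDist.mod (hn : n ≠ 0) : EvenBlockRightDist m n n (m % n) := by
  by_cases hr : m % n = 0
  · rw [hr]
    exact .height_zero m n n
  have hdiv : n % (m % n) + n / (m % n) * (m % n) = n := Nat.mod_add_div' n (m % n)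
  have hdiv₁ : (n / (m % n) - 1) * (m % n) = n / (m % n) * (m % n) - m % n :=
    Nat.sub_one_mul _ _
  constructor
  · intro j k he hj _ _ hk
    exact isRightDist_bottomLeft hn hr hj (by omega) he
  · intro j k c d he hj₁ hj₂ hk₁ hk₂ hd hjc
    exact isRightDist_bottomLeft_last hn hr hj₁ hj₂ (by omega) (by omega) hd hjc he

end BottomLeft

theorem evenBlockRightDist_airLam (n : ℕ) :
    ∀ m t, EvenBlockRightDist m n (airLam m n (2 * t)) (airLam m n (2 * t + 1)) := by
  induction n using Nat.strong_induction_on with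
  | _ n ih =>
  intro m t
  rcases Nat.eq_zero_or_pos n with rfl | hn
  · exact .width_zero m _ _
  rcases airLam_evenPair_cases (m := m) hn t with hB | hAB | ⟨hA, hB⟩ | ⟨hr, s, hA, hB⟩
  · rw [hB]
    exact .height_zero m n _
  · exact .of_le hAB
  · rw [hA, hB]
    exact .mod hn.ne'
  · rw [hA, hB]
    have hrn : m % n < n := Nat.mod_lt _ hn
    have hn'r : n % (m % n) < m % n := Nat.mod_lt _ (Nat.pos_of_ne_zero hr)
    exact .of_mod hn.ne' hr (airLam_two_mul_le s)
      ((airLam_two_mul_add_one_le s).trans (Nat.sub_le _ _)) (ih _ (by omega) _ s)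

theorem air_right_distance_general (m n : ℕ)
    (l : ℕ) :
    (∀ i j k : ℕ, 2 * i ≤ l →
      airEntry m n j k = 1 →
      m ≤ j + airLam m n (2 * i + 1) → j < m →
      n ≤ k + airLam m n (2 * i) →
      k + airLam m n (2 * i) < n + (airBeta m n (2 * i) - 1) * airLam m n (2 * i + 1) →
      IsRightDist m n j k (airLam m n (2 * i + 1))) ∧
    (∀ i j k c d : ℕ, 2 * i + 2 ≤ l →
      airEntry m n j k = 1 →
      m ≤ j + airLam m n (2 * i + 1) → j < m →
      n + (airBeta m n (2 * i) - 1) * airLam m n (2 * i + 1) ≤ k + airLam m n (2 * i) →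
      k + airLam m n (2 * i) < n + airBeta m n (2 * i) * airLam m n (2 * i + 1) →
      d < airLam m n (2 * i + 2) →
      j + airLam m n (2 * i + 1) = m + c * airLam m n (2 * i + 2) + d →
      IsRightDist m n j k (airLam m n (2 * i + 1) - c * airLam m n (2 * i + 2))) := by
  refine ⟨fun i j k _ => (evenBlockRightDist_airLam n m i).1 j k,
    fun i j k c d _ he hj₁ hj₂ => ?_⟩
  rw [airLam_add_two_of_ne_zero (t := 2 * i) (by omega)]
  exact (evenBlockRightDist_airLam n m i).2 j k c d he hj₁ hj₂

/-- Right-distances in the `m × n` AIR matrix (with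
`λ_i = airLam m n (i+1)`, `β_i = airBeta m n i`, `l` the largest index with `λ_l > 0`),
for a position `(j,k)` with `L(j,k) = 1` in the even-indexed block `I_{λ_{2i}×β_{2i}λ_{2i}}`
(rows `m-λ_{2i} … m-1`, columns `n-λ_{2i-1} … n-λ_{2i-1}+β_{2i}λ_{2i}-1`), with local
indices `j_R = j - (m-λ_{2i})`, `k_R = k - (n-λ_{2i-1})`:
(a) if `k_R ≤ (β_{2i}-1)λ_{2i} - 1` then `d_right(j,k) = λ_{2i}`;
(b) if `(β_{2i}-1)λ_{2i} ≤ k_R ≤ β_{2i}λ_{2i} - 1` and `i ≤ ⌊l/2⌋ - 1`, then, writing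
`j_R = c·λ_{2i+1} + d` with `0 ≤ d < λ_{2i+1}`, `d_right(j,k) = λ_{2i} - c·λ_{2i+1}`. -/
theorem air_right_distance (m n : ℕ) (hn : 1 ≤ n) (hnm : n < m)
    (l : ℕ) (hl : 0 < airLam m n (l + 1)) (hl' : airLam m n (l + 2) = 0) :
    (∀ i j k : ℕ, 2 * i ≤ l →
      airEntry m n j k = 1 →
      m ≤ j + airLam m n (2 * i + 1) → j < m →
      n ≤ k + airLam m n (2 * i) →
      k + airLam m n (2 * i) < n + (airBeta m n (2 * i) - 1) * airLam m n (2 * i + 1) →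
      IsRightDist m n j k (airLam m n (2 * i + 1))) ∧
    (∀ i j k c d : ℕ, 2 * i + 2 ≤ l →
      airEntry m n j k = 1 →
      m ≤ j + airLam m n (2 * i + 1) → j < m →
      n + (airBeta m n (2 * i) - 1) * airLam m n (2 * i + 1) ≤ k + airLam m n (2 * i) →
      k + airLam m n (2 * i) < n + airBeta m n (2 * i) * airLam m n (2 * i + 1) →
      d < airLam m n (2 * i + 2) →
      j + airLam m n (2 * i + 1) = m + c * airLam m n (2 * i + 2) + d →
      IsRightDist m n j k (airLam m n (2 * i + 1) - c * airLam m n (2 * i + 2))) :=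
  air_right_distance_general m n l
end

section
/- Let K, D, U be integers with 0 ≤ U ≤ D and U + D < K, let (a,b) ∈ S_{K,D,U}, set m = Kb and n = b(D+1)+a with m > n, and let L be the AIR matrix of size m × n. Then for every row index k with 0 ≤ k ≤ m − n − 1, setting t = ⌊k/b⌋: L(k, k mod n) = 1, and every other row index j ≠ k with L(j, k mod n) = 1 satisfies ⌊j/b⌋ ≢ t−U, t−U+1, …, t+D (mod K). Consequently, receiver R_t of the (K,D,U) SUICP-SNI decodes its wanted message symbol x_{t,(k mod b)+1} from the single broadcast symbol c_{k mod n} by subtracting message symbols it already knows. -/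
set_option linter.unusedVariables false

/-- diagonal-part bound. -/
lemma air_diag_bound (m n j c : ℕ) (hn : 0 < n) (hj : j < m) (hjn : j % n = c)
    (hjtop : j < m - m % n ∨ m % n = 0) : j + Nat.gcd m n ≤ c + m := by
  have hg : Nat.gcd m n ≤ n := Nat.le_of_dvd hn (Nat.gcd_dvd_right m n)
  have e1 : n * (j / n) + j % n = j := Nat.div_add_mod j n
  have e2 : n * (m / n) + m % n = m := Nat.div_add_mod m n
  have hlt : n * (j / n) < n * (m / n) := by
    rcases hjtop with h | h
    · omega
    · omega
  have : j / n < m / n := Nat.lt_of_mul_lt_mul_left hlt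
  have : n * (j / n + 1) ≤ n * (m / n) := Nat.mul_le_mul_left n this
  rw [Nat.mul_add, Nat.mul_one] at this
  omega

/-- Lemma C: every support row satisfies `j + gcd m n ≤ c + m`. -/
lemma airC : ∀ n m j c : ℕ, 0 < n → n ≤ m → j < m → c < n →
    airEntry m n j c = 1 → j + Nat.gcd m n ≤ c + m := by
  intro n
  induction n using Nat.strong_induction_on with
  | _ n IH =>
  intro m j c hn hnm hj hc hair
  rw [airEntry] at hair
  rw [dif_neg (by omega : ¬ n = 0)] at hair
  by_cases hr : m % n = 0
  · rw [dif_pos hr] at hair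
    have : j % n = c := by by_contra h; rw [if_neg h] at hair; exact absurd hair (by norm_num)
    exact air_diag_bound m n j c hn hj this (Or.inr hr)
  rw [dif_neg hr] at hair
  by_cases htop : j < m - m % n
  · rw [if_pos htop] at hair
    have : j % n = c := by by_contra h; rw [if_neg h] at hair; exact absurd hair (by norm_num)
    exact air_diag_bound m n j c hn hj this (Or.inl htop)
  rw [if_neg htop] at hair
  have hrn : m % n < n := Nat.mod_lt _ hn
  have hrm : m % n ≤ m := Nat.mod_le m n
  have hgr : Nat.gcd m n ≤ m % n := Nat.le_of_dvd (by omega) (by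
    exact (Nat.dvd_mod_iff (Nat.gcd_dvd_right m n)).mpr (Nat.gcd_dvd_left m n))
  by_cases hmid : c < n - n % (m % n)
  · rw [if_pos hmid] at hair
    have : c % (m % n) = j - (m - m % n) := by
      by_contra h; rw [if_neg h] at hair; exact absurd hair (by norm_num)
    have hcr : c % (m % n) ≤ c := Nat.mod_le c (m % n)
    omega
  · rw [if_neg hmid] at hair
    set r := m % n with hrdef
    set s := n % r with hsdef
    have hs0 : 0 < s := by
      by_contra h
      push_neg at h
      interval_cases s
      omega
    have hsr : s < r := Nat.mod_lt _ (by omega)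
    have hIH := IH s (by omega) r (j - (m - r)) (c - (n - s)) hs0 (by omega) (by omega) (by omega) hair
    have hgcd : Nat.gcd m n = Nat.gcd r s := by
      rw [hsdef, hrdef]
      rw [Nat.gcd_comm m n, Nat.gcd_rec n m, Nat.gcd_rec (m % n) n, Nat.gcd_comm]
    rw [← hgcd] at hIH
    omega

/-- gap between distinct rows with equal residue mod n. -/
lemma mod_eq_gap (n j k : ℕ) (hn : 0 < n) (h : j % n = k % n) (hlt : j < k) : j + n ≤ k := by
  have e1 : n * (j / n) + j % n = j := Nat.div_add_mod j n
  have e2 : n * (k / n) + k % n = k := Nat.div_add_mod k n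
  have h1 : n * (j / n) < n * (k / n) := by omega
  have h2 := Nat.lt_of_mul_lt_mul_left h1
  have h3 : n * (j / n + 1) ≤ n * (k / n) := Nat.mul_le_mul_left n h2
  rw [Nat.mul_add, Nat.mul_one] at h3
  omega

/-- lower bound for bottom rows. -/
lemma bottom_lower (m n j k : ℕ) (hn : 0 < n) (hnm : n < m) (hk : k < m - n)
    (hj : m - m % n ≤ j) (hmid : k % n < m % n → j = m - m % n + k % n) : k + n ≤ j := by
  have e1 : n * (k / n) + k % n = k := Nat.div_add_mod k n
  have e2 : n * (m / n) + m % n = m := Nat.div_add_mod m n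
  have hrn : m % n < n := Nat.mod_lt _ hn
  have hcn : k % n < n := Nat.mod_lt _ hn
  by_cases hc : k % n < m % n
  · have hj' := hmid hc
    have h1 : n * (k / n) < n * (m / n) := by omega
    have h2 : k / n < m / n := Nat.lt_of_mul_lt_mul_left h1
    have h3 : n * (k / n + 1) ≤ n * (m / n) := Nat.mul_le_mul_left n h2
    rw [Nat.mul_add, Nat.mul_one] at h3
    omega
  · push_neg at hc
    have h1 : n * (k / n + 1) < n * (m / n) := by
      rw [Nat.mul_add, Nat.mul_one]; omega
    have h2 : k / n + 1 < m / n := Nat.lt_of_mul_lt_mul_left h1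
    have h3 : n * (k / n + 2) ≤ n * (m / n) := Nat.mul_le_mul_left n (by omega)
    rw [Nat.mul_add] at h3
    omega

/-- structural interference lemma for the AIR matrix. -/
lemma air_interference (m n j k : ℕ) (hn : 0 < n) (hnm : n < m) (hk : k < m - n)
    (hjm : j < m) (hjk : j ≠ k) (hair : airEntry m n j (k % n) = 1) :
    (k + n ≤ j ∧ j + Nat.gcd m n ≤ k + m) ∨ (j + n ≤ k) := by
  have hCup : j + Nat.gcd m n ≤ k % n + m :=
    airC n m j (k % n) hn (le_of_lt hnm) hjm (Nat.mod_lt _ hn) hair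
  have hup : j + Nat.gcd m n ≤ k + m := by have := Nat.mod_le k n; omega
  rw [airEntry] at hair
  rw [dif_neg (by omega : ¬ n = 0)] at hair
  have hmain : j % n = k % n ∨
      (m - m % n ≤ j ∧ (k % n % (m % n) = j - (m - m % n) ∨ n - n % (m % n) ≤ k % n)) := by
    by_cases hr : m % n = 0
    · rw [dif_pos hr] at hair
      left; by_contra h; rw [if_neg h] at hair; exact absurd hair (by norm_num)
    · rw [dif_neg hr] at hair
      by_cases htop : j < m - m % n
      · rw [if_pos htop] at hair
        left; by_contra h; rw [if_neg h] at hair; exact absurd hair (by norm_num)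
      · right
        refine ⟨by omega, ?_⟩
        by_cases hmid : k % n < n - n % (m % n)
        · rw [if_neg htop, if_pos hmid] at hair
          left; by_contra h; rw [if_neg h] at hair; exact absurd hair (by norm_num)
        · right; omega
  rcases hmain with hmod | ⟨hbot, hinfo⟩
  · rcases Nat.lt_or_ge j k with hlt | hge
    · exact Or.inr (mod_eq_gap n j k hn hmod hlt)
    · have hlt : k < j := by omega
      exact Or.inl ⟨mod_eq_gap n k j hn hmod.symm hlt, hup⟩
  · refine Or.inl ⟨?_, hup⟩
    apply bottom_lower m n j k hn hnm hk hbot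
    intro hc
    rcases hinfo with he | hge
    · rw [Nat.mod_eq_of_lt hc] at he
      omega
    · exfalso
      have e3 : (m % n) * (n / (m % n)) + n % (m % n) = n := Nat.div_add_mod n (m % n)
      have hr0 : 0 < m % n := by omega
      have hrn2 : m % n < n := Nat.mod_lt _ hn
      have h1 : 1 ≤ n / (m % n) := (Nat.one_le_div_iff hr0).mpr (le_of_lt hrn2)
      have h2 : (m % n) * 1 ≤ (m % n) * (n / (m % n)) := Nat.mul_le_mul_left _ h1
      rw [Nat.mul_one] at h2
      omega

/-- diagonal entry is 1. -/
lemma air_diag (m n k : ℕ) (hn : 0 < n) (hk : k < m - n) : airEntry m n k (k % n) = 1 := by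
  rw [airEntry, dif_neg (by omega : ¬ n = 0)]
  have hrn : m % n < n := Nat.mod_lt _ hn
  by_cases hr : m % n = 0
  · rw [dif_pos hr, if_pos rfl]
  · rw [dif_neg hr, if_pos (by omega : k < m - m % n), if_pos rfl]

lemma div_lower (b c j k : ℕ) (hb : 0 < b) (h : k + b * c ≤ j) : k / b + c ≤ j / b := by
  have h2 : (k + b * c) / b ≤ j / b := Nat.div_le_div_right h
  rwa [Nat.add_mul_div_left _ _ hb] at h2

lemma div_upper (b c e j k : ℕ) (hb : 0 < b) (h : j + b * c ≤ k + b * e) :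
    j / b + c ≤ k / b + e := by
  have h2 : (j + b * c) / b ≤ (k + b * e) / b := Nat.div_le_div_right h
  rwa [Nat.add_mul_div_left _ _ hb, Nat.add_mul_div_left _ _ hb] at h2

lemma arith_gt (K D U s T t : ℕ) (hUD : U ≤ D) (hK : U + D < K) (hs : s ≤ U + D)
    (hT : T < K) (ht : t < K) (h1 : t + (D + 1) ≤ T) (h2 : T + (U + 1) ≤ t + K) :
    T ≠ (t + (K - U) + s) % K := by
  intro h
  have hd := Nat.div_add_mod (t + (K - U) + s) K
  have hq : (t + (K - U) + s) / K < 3 := Nat.div_lt_of_lt_mul (by omega)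
  rw [← h] at hd
  obtain ⟨Q, hQ⟩ : ∃ q, (t + (K - U) + s) / K = q := ⟨_, rfl⟩
  rw [hQ] at hd hq
  interval_cases Q <;> omega

lemma arith_lt (K D U s T t : ℕ) (hUD : U ≤ D) (hK : U + D < K) (hs : s ≤ U + D)
    (hT : T < K) (ht : t < K) (h1 : T + (D + 1) ≤ t) (h2 : t + (D + 1) ≤ T + K) :
    T ≠ (t + (K - U) + s) % K := by
  intro h
  have hd := Nat.div_add_mod (t + (K - U) + s) K
  have hq : (t + (K - U) + s) / K < 3 := Nat.div_lt_of_lt_mul (by omega)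
  rw [← h] at hd
  obtain ⟨Q, hQ⟩ : ∃ q, (t + (K - U) + s) / K = q := ⟨_, rfl⟩
  rw [hQ] at hd hq
  interval_cases Q <;> omega

/-- Low-complexity decoding, first row range: for the `(K,D,U)` SUICP-SNI
with `(a,b) ∈ S_{K,D,U}`, `m = Kb`, `n = b(D+1)+a`, `m > n`, and `L` the `m × n` AIR
matrix, every row index `k < m - n` (with `t = ⌊k/b⌋`) satisfies `L(k, k mod n) = 1`,
while every other row `j` with `L(j, k mod n) = 1` has `⌊j/b⌋ ∉ {t-U, …, t+D} (mod K)`;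
hence receiver `R_t` decodes its wanted symbol `x_{t,(k mod b)+1}` from the single
broadcast symbol `c_{k mod n}` by subtracting message symbols it already knows. -/
theorem air_decoding_first_range (K D U a b m n : ℕ)
    (hUD : U ≤ D) (hUDK : U + D < K) (hb : 1 ≤ b)
    (hm : m = K * b) (hn : n = b * (D + 1) + a) (hmn : n < m)
    (hS : b * (U + 1) ≤ Nat.gcd (b * K) (b * (D + 1) + a)) :
    ∀ k : ℕ, k < m - n →
      (airEntry m n k (k % n) = 1 ∧
        ∀ j : ℕ, j < m → j ≠ k → airEntry m n j (k % n) = 1 →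
          ∀ s : ℕ, s ≤ U + D → j / b ≠ (k / b + (K - U) + s) % K) ∧
      (∀ (F : Type*) [Field F] (x : ℕ → F),
        x k = (∑ j ∈ Finset.range m, x j * (if airEntry m n j (k % n) = 1 then (1 : F) else 0))
            - ∑ j ∈ (Finset.range m).filter (fun j => j ≠ k ∧ airEntry m n j (k % n) = 1), x j) := by
  subst hm hn
  intro k hk
  have hb0 : 0 < b := hb
  have hn0 : 0 < b * (D + 1) + a := by positivity
  have hbD : b * 1 ≤ b * (D + 1) := Nat.mul_le_mul_left b (by omega)
  rw [Nat.mul_one] at hbD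
  have hgS : b * (U + 1) ≤ Nat.gcd (K * b) (b * (D + 1) + a) := by
    rwa [Nat.mul_comm b K] at hS
  have hcomm : K * b = b * K := Nat.mul_comm K b
  have hdiag := air_diag (K * b) (b * (D + 1) + a) k hn0 hk
  have hkm : k < K * b := by omega
  refine ⟨⟨hdiag, ?_⟩, ?_⟩
  · intro j hjm hne hair s hs
    have hT : j / b < K := (Nat.div_lt_iff_lt_mul hb0).mpr (by omega)
    have ht : k / b < K := (Nat.div_lt_iff_lt_mul hb0).mpr (by omega)
    rcases air_interference (K * b) (b * (D + 1) + a) j k hn0 hmn hk hjm hne hair with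
      ⟨hl, hu⟩ | hlt
    · have h1 : k / b + (D + 1) ≤ j / b := div_lower b (D + 1) j k hb0 (by omega)
      have h2 : j / b + (U + 1) ≤ k / b + K :=
        div_upper b (U + 1) K j k hb0 (by omega)
      exact arith_gt K D U s (j / b) (k / b) hUD hUDK hs hT ht h1 h2
    · have h1 : j / b + (D + 1) ≤ k / b := div_lower b (D + 1) k j hb0 (by omega)
      have h2 : k / b + (D + 1) ≤ j / b + K :=
        div_upper b (D + 1) K k j hb0 (by omega)
      exact arith_lt K D U s (j / b) (k / b) hUD hUDK hs hT ht h1 h2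
  · intro F _ x
    have hsum1 : (∑ j ∈ Finset.range (K * b),
        x j * (if airEntry (K * b) (b * (D + 1) + a) j (k % (b * (D + 1) + a)) = 1
          then (1 : F) else 0)) =
        ∑ j ∈ (Finset.range (K * b)).filter
          (fun j => airEntry (K * b) (b * (D + 1) + a) j (k % (b * (D + 1) + a)) = 1), x j := by
      rw [Finset.sum_filter]
      apply Finset.sum_congr rfl
      intro j _
      by_cases hj : airEntry (K * b) (b * (D + 1) + a) j (k % (b * (D + 1) + a)) = 1
      · rw [if_pos hj, if_pos hj, mul_one]
      · rw [if_neg hj, if_neg hj, mul_zero]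
    have hins : (Finset.range (K * b)).filter
          (fun j => airEntry (K * b) (b * (D + 1) + a) j (k % (b * (D + 1) + a)) = 1) =
        insert k ((Finset.range (K * b)).filter
          (fun j => j ≠ k ∧ airEntry (K * b) (b * (D + 1) + a) j (k % (b * (D + 1) + a)) = 1)) := by
      ext j
      simp only [Finset.mem_insert, Finset.mem_filter, Finset.mem_range]
      constructor
      · rintro ⟨hjr, hja⟩
        by_cases hjk : j = k
        · exact Or.inl hjk
        · exact Or.inr ⟨hjr, hjk, hja⟩
      · rintro (rfl | ⟨hjr, _, hja⟩)
        · exact ⟨hkm, hdiag⟩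
        · exact ⟨hjr, hja⟩
    have hnotmem : k ∉ (Finset.range (K * b)).filter
        (fun j => j ≠ k ∧ airEntry (K * b) (b * (D + 1) + a) j (k % (b * (D + 1) + a)) = 1) := by
      simp
    rw [hsum1, hins, Finset.sum_insert hnotmem]
    ring
end

section
/- Let K, D, U be integers with 0 ≤ U ≤ D and U + D < K, let (a,b) ∈ S_{K,D,U}, set m = Kb and n = b(D+1)+a with m > n, and let L be the AIR matrix of size m × n with Euclidean data λ_i, β_i, l. Let k be a row index with k ∈ D̃_i = {m−λ_{2i−1}, …, m−λ_{2i−1}+(β_{2i}−1)λ_{2i}−1} for some i with 0 ≤ i ≤ ⌈l/2⌉ (where λ_{−1} = n), set k' = k − (m−n), μ = d_right(k'+d_down(k'), k'), and t = ⌊k/b⌋. Then the coordinatewise mod-2 sum of columns k' and k'+μ of L has entry 1 in row k, and every other row index j ≠ k at which this mod-2 sum equals 1 satisfies ⌊j/b⌋ ≢ t−U, t−U+1, …, t+D (mod K). Consequently, receiver R_t of the (K,D,U) SUICP-SNI decodes x_{t,(k mod b)+1} as c_{k'} + c_{k'+μ} plus the XOR of message symbols it already knows. -/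
set_option linter.unusedVariables false

/-- The down-distance `d_down(k)` of the diagonal entry `L(k,k)` of the `m × n` AIR
matrix: the largest `v` such that `L(k+v, k) = 1` with `k + v < m` (and `v > 0`). -/
noncomputable def dDown (m n k : ℕ) : ℕ :=
  sSup {v : ℕ | 0 < v ∧ k + v < m ∧ airEntry m n (k + v) k = 1}

/-- The right-distance `d_right(j,k)` of the entry `L(j,k)` of the `m × n` AIR matrix:
the smallest `v > 0` such that `L(j, k+v) = 1` with `k + v < n`. -/
noncomputable def dRight (m n j k : ℕ) : ℕ :=
  sInf {v : ℕ | 0 < v ∧ k + v < n ∧ airEntry m n j (k + v) = 1}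

set_option maxHeartbeats 1000000

lemma airLam_rec (m n i : ℕ) : airLam m n (i+2) =
    if airLam m n (i+1) = 0 then 0 else airLam m n i % airLam m n (i+1) := rfl

lemma airLam_zero_succ (m n t : ℕ) (ht : 1 ≤ t) (h : airLam m n t = 0) :
    airLam m n (t+1) = 0 := by
  obtain ⟨u, rfl⟩ : ∃ u, t = u + 1 := ⟨t - 1, by omega⟩
  rw [airLam_rec, h]; simp

lemma airLam_pos_of_le (m n t u : ℕ) (ht : 1 ≤ t) (htu : t ≤ u) (h : 0 < airLam m n u) :
    0 < airLam m n t := by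
  by_contra hc
  have h0 : airLam m n t = 0 := by omega
  have : ∀ v, airLam m n (t + v) = 0 := by
    intro v
    induction v with
    | zero => exact h0
    | succ w IH =>
      have hz := airLam_zero_succ m n (t + w) (by omega) IH
      rw [show t + (w+1) = t + w + 1 by ring]; exact hz
  have h2 := this (u - t)
  rw [show t + (u - t) = u by omega] at h2; omega

lemma airLam_succ_le (m n t : ℕ) : airLam m n (t+3) ≤ airLam m n (t+2) := by
  rw [show t+3 = (t+1)+2 from rfl, airLam_rec]
  split
  · omega
  · exact le_of_lt (Nat.mod_lt _ (by omega))

lemma airLam_le_two (m n t : ℕ) (h : 2 ≤ t) : airLam m n t ≤ airLam m n 2 := by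
  obtain ⟨u, rfl⟩ : ∃ u, t = 2 + u := ⟨t - 2, by omega⟩
  induction u with
  | zero => exact le_refl _
  | succ w IH =>
    have h1 := airLam_succ_le m n w
    have h2 := IH (by omega)
    calc airLam m n (2 + (w+1)) = airLam m n (w+3) := by ring_nf
    _ ≤ airLam m n (w+2) := airLam_succ_le m n w
    _ = airLam m n (2+w) := by ring_nf
    _ ≤ _ := h2

lemma gcd_dvd_airLam (m n : ℕ) : ∀ t, Nat.gcd m n ∣ airLam m n t := by
  intro t
  induction t using Nat.strong_induction_on with
  | _ t IH =>
    match t with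
    | 0 => exact Nat.gcd_dvd_right m n
    | 1 => exact Nat.dvd_sub (Nat.gcd_dvd_left m n) (Nat.gcd_dvd_right m n)
    | (u+2) =>
      rw [airLam_rec]
      split
      · exact dvd_zero _
      · exact (Nat.dvd_mod_iff (IH (u+1) (by omega))).2 (IH u (by omega))

lemma airLam_shift (m n m' n' a a' : ℕ)
    (h0 : airLam m n a = airLam m' n' a') (h1 : airLam m n (a+1) = airLam m' n' (a'+1)) :
    ∀ t, airLam m n (a+t) = airLam m' n' (a'+t) := by
  intro t
  induction t using Nat.strong_induction_on with
  | _ t IH =>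
    match t with
    | 0 => exact h0
    | 1 => exact h1
    | (u+2) =>
      have e1 := IH u (by omega)
      have e2 := IH (u+1) (by omega)
      rw [show a + (u+2) = (a+u) + 2 by ring, airLam_rec,
          show a' + (u+2) = (a'+u) + 2 by ring, airLam_rec,
          show a+u+1 = a+(u+1) by ring, show a'+u+1 = a'+(u+1) by ring, e1, e2]

lemma airEntry_le_one : ∀ n m j k, airEntry m n j k ≤ 1 := by
  intro n
  induction n using Nat.strong_induction_on with
  | _ n IH =>
    intro m j k
    rw [airEntry]
    split
    · omega
    · split
      · split <;> omega
      · split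
        · split <;> omega
        · split
          · split <;> omega
          · rename_i hn hr _ _
            exact IH (n % (m % n))
              (lt_of_lt_of_le (Nat.mod_lt _ (Nat.pos_of_ne_zero hr))
                (le_of_lt (Nat.mod_lt _ (Nat.pos_of_ne_zero hn)))) _ _ _

lemma airEntry_top (m n j c : ℕ) (hn : 0 < n) (hj : j < m - m % n) :
    airEntry m n j c = if j % n = c then 1 else 0 := by
  by_cases hr : m % n = 0
  · rw [airEntry, dif_neg (by omega), dif_pos hr]
  · rw [airEntry, dif_neg (by omega), dif_neg hr, if_pos hj]

lemma airEntry_deep (m n j c : ℕ) (hn : 0 < n) (hmn : n < m) (h2n : m < 2*n) :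
    airEntry m n j c =
      if j < n then (if j = c then 1 else 0)
      else if c < n - n % (m - n) then (if c % (m - n) = j - n then 1 else 0)
      else airEntry (m - n) (n % (m - n)) (j - n) (c - (n - n % (m - n))) := by
  have hmod : m % n = m - n := by
    rw [Nat.mod_eq_sub_mod (by omega), Nat.mod_eq_of_lt (by omega)]
  rw [airEntry, dif_neg (by omega), hmod, dif_neg (by omega),
      show m - (m - n) = n by omega]
  split
  · rename_i hj
    rw [Nat.mod_eq_of_lt hj]
  · rfl

/-- Bundle of structural conclusions about columns `kp` and `kp+μ` of the AIR matrix. -/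
def MC (m n k kp μ : ℕ) : Prop :=
  (m - n ≤ k ∧ k < m) ∧ kp + μ < n ∧
  (∃ R, kp < R ∧ R < m ∧ airEntry m n R kp = 1 ∧
    (∀ j, R < j → j < m → airEntry m n j kp = 0) ∧
    airEntry m n R (kp + μ) = 1 ∧
    (∀ c, kp < c → c < kp + μ → airEntry m n R c = 0)) ∧
  (airEntry m n k kp + airEntry m n k (kp + μ)) % 2 = 1 ∧
  (∀ j, j < m → (airEntry m n j kp + airEntry m n j (kp + μ)) % 2 = 1 →
    kp ≤ j ∧ j ≤ k ∧ Nat.gcd m n ∣ (k - j))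

lemma gcd_sub_left (m n : ℕ) (h : n ≤ m) : Nat.gcd (m - n) n = Nat.gcd m n := by
  conv_rhs => rw [show m = (m - n) + n by omega]
  rw [Nat.gcd_add_self_left]

lemma airEntry_peel (m n j c : ℕ) (hn : 0 < n) (h2n : 2*n < m) (hmod : m % n ≠ 0)
    (hc : c < n) :
    airEntry m n j c =
      if j < n then (if j = c then 1 else 0) else airEntry (m - n) n (j - n) c := by
  have hn0 : n ≠ 0 := by omega
  have hm2 : m % n < n := Nat.mod_lt _ hn
  have hdiv2 : 2 ≤ m / n := (Nat.le_div_iff_mul_le hn).2 (by omega)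
  have h4 : 2 * n ≤ (m / n) * n := Nat.mul_le_mul_right n hdiv2
  have h5 : n * (m / n) + m % n = m := Nat.div_add_mod m n
  rw [mul_comm] at h5
  have hdd : 2 * n ≤ m - m % n := by omega
  have em : (m - n) % n = m % n := by
    conv_rhs => rw [show m = (m - n) + n by omega]
    rw [Nat.add_mod_right]
  by_cases hj : j < n
  · rw [if_pos hj, airEntry_top m n j c hn (by omega), Nat.mod_eq_of_lt hj]
  · rw [if_neg hj]
    by_cases hj2 : j < m - m % n
    · have ej : (j - n) % n = j % n := by
        conv_rhs => rw [show j = (j - n) + n by omega]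
        rw [Nat.add_mod_right]
      rw [airEntry_top m n j c hn hj2, airEntry_top (m - n) n (j - n) c hn (by omega), ej]
    · have e1 : airEntry m n j c =
          if c < n - n % (m % n) then (if c % (m % n) = j - (m - m % n) then 1 else 0)
          else airEntry (m % n) (n % (m % n)) (j - (m - m % n)) (c - (n - n % (m % n))) := by
        rw [airEntry, dif_neg hn0, dif_neg hmod, if_neg hj2]
      have hj3 : ¬ (j - n < (m - n) - (m - n) % n) := by rw [em]; omega
      have e2 : airEntry (m - n) n (j - n) c =
          if c < n - n % ((m - n) % n) then
            (if c % ((m - n) % n) = (j - n) - ((m - n) - (m - n) % n) then 1 else 0)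
          else airEntry ((m - n) % n) (n % ((m - n) % n)) ((j - n) - ((m - n) - (m - n) % n))
            (c - (n - n % ((m - n) % n))) := by
        rw [airEntry, dif_neg hn0, dif_neg (by rw [em]; exact hmod), if_neg hj3]
      rw [e1, e2, em, show (j - n) - ((m - n) - m % n) = j - (m - m % n) by omega]

lemma MC_peel (m n k kp μ : ℕ) (hn : 0 < n) (h2n : 2*n < m) (hmod : m % n ≠ 0)
    (hkn : n < k) (hkp : kp = k - (m - n)) (hμ : 0 < μ) (hgd : Nat.gcd m n ∣ μ)
    (h : MC (m - n) n (k - n) kp μ) : MC m n k kp μ := by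
  obtain ⟨⟨hc1a, hc1b⟩, hc2, ⟨R, hR1, hR2, hR3, hR4, hR5, hR6⟩, hc3, hc4⟩ := h
  have hkpn : kp < n := by omega
  have hkmn : m - n ≤ k := by omega
  have hpeel := fun j c hc => airEntry_peel m n j c hn h2n hmod hc
  refine ⟨⟨by omega, by omega⟩, hc2, ⟨R + n, by omega, by omega, ?_, ?_, ?_, ?_⟩, ?_, ?_⟩
  · rw [hpeel (R + n) kp hkpn, if_neg (by omega), show R + n - n = R by omega]; exact hR3
  · intro j hj1 hj2
    rw [hpeel j kp hkpn, if_neg (by omega)]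
    exact hR4 (j - n) (by omega) (by omega)
  · rw [hpeel (R + n) (kp + μ) hc2, if_neg (by omega), show R + n - n = R by omega]; exact hR5
  · intro c hcl hcr
    rw [hpeel (R + n) c (by omega), if_neg (by omega), show R + n - n = R by omega]
    exact hR6 c hcl hcr
  · rw [hpeel k kp hkpn, if_neg (by omega), hpeel k (kp + μ) hc2, if_neg (by omega)]
    exact hc3
  · intro j hj hodd
    by_cases hjn : j < n
    · rw [hpeel j kp hkpn, hpeel j (kp + μ) hc2, if_pos hjn, if_pos hjn] at hodd
      by_cases h1 : j = kp
      · rw [if_pos h1, if_neg (by omega)] at hodd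
        refine ⟨by omega, by omega, ?_⟩
        rw [h1, hkp, show k - (k - (m - n)) = m - n by omega]
        exact Nat.dvd_sub (Nat.gcd_dvd_left m n) (Nat.gcd_dvd_right m n)
      · rw [if_neg h1] at hodd
        by_cases h2 : j = kp + μ
        · refine ⟨by omega, by omega, ?_⟩
          rw [h2, hkp, show k - (k - (m - n) + μ) = (m - n) - μ by omega]
          exact Nat.dvd_sub
            (Nat.dvd_sub (Nat.gcd_dvd_left m n) (Nat.gcd_dvd_right m n)) hgd
        · rw [if_neg h2] at hodd; omega
    · rw [hpeel j kp hkpn, if_neg hjn, hpeel j (kp + μ) hc2, if_neg hjn] at hodd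
      obtain ⟨ha, hb, hdvd⟩ := hc4 (j - n) (by omega) hodd
      refine ⟨by omega, by omega, ?_⟩
      rw [show k - j = (k - n) - (j - n) by omega, ← gcd_sub_left m n (by omega)]
      exact hdvd

lemma MC_deep (m n k kp μ : ℕ) (hn : 0 < n) (hmn : n < m) (h2n : m < 2*n)
    (hs : 0 < n % (m - n)) (hkp : kp = k - (m - n)) (hkn : n ≤ k)
    (hkpns : n - n % (m - n) ≤ kp) (hμ : 0 < μ) (hgd : Nat.gcd m n ∣ μ)
    (h : MC (m - n) (n % (m - n)) (k - n) (kp - (n - n % (m - n))) μ) : MC m n k kp μ := by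
  set r := m - n with hr
  set s := n % (m - n) with hsdef
  obtain ⟨⟨hc1a, hc1b⟩, hc2, ⟨R, hR1, hR2, hR3, hR4, hR5, hR6⟩, hc3, hc4⟩ := h
  have hsr : s < r := Nat.mod_lt _ (by omega)
  have hdeep := fun j c => airEntry_deep m n j c hn hmn h2n
  have hkpm : kp + μ < n := by omega
  have hgg : Nat.gcd r s = Nat.gcd m n := by
    rw [hsdef, hr, Nat.gcd_comm (m - n) (n % (m - n)), ← Nat.gcd_rec (m - n) n]
    exact gcd_sub_left m n (by omega)
  have hkpn : kp < n := by omega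
  refine ⟨⟨by omega, by omega⟩, hkpm, ⟨R + n, by omega, by omega, ?_, ?_, ?_, ?_⟩, ?_, ?_⟩
  · rw [hdeep (R + n) kp, if_neg (by omega), if_neg (by omega), show R + n - n = R by omega]
    exact hR3
  · intro j hj1 hj2
    rw [hdeep j kp, if_neg (by omega), if_neg (by omega)]
    exact hR4 (j - n) (by omega) (by omega)
  · rw [hdeep (R + n) (kp + μ), if_neg (by omega), if_neg (by omega),
      show R + n - n = R by omega, show kp + μ - (n - s) = kp - (n - s) + μ by omega]
    exact hR5
  · intro c hcl hcr
    rw [hdeep (R + n) c, if_neg (by omega), if_neg (by omega), show R + n - n = R by omega]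
    exact hR6 (c - (n - s)) (by omega) (by omega)
  · rw [hdeep k kp, if_neg (by omega), if_neg (by omega), hdeep k (kp + μ),
      if_neg (by omega), if_neg (by omega), show kp + μ - (n - s) = kp - (n - s) + μ by omega]
    exact hc3
  · intro j hj hodd
    by_cases hjn : j < n
    · rw [hdeep j kp, if_pos hjn, hdeep j (kp + μ), if_pos hjn] at hodd
      by_cases h1 : j = kp
      · rw [if_pos h1, if_neg (by omega)] at hodd
        refine ⟨by omega, by omega, ?_⟩
        rw [h1, hkp, show k - (k - (m - n)) = m - n by omega]
        exact Nat.dvd_sub (Nat.gcd_dvd_left m n) (Nat.gcd_dvd_right m n)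
      · rw [if_neg h1] at hodd
        by_cases h2 : j = kp + μ
        · refine ⟨by omega, by omega, ?_⟩
          rw [h2, hkp, show k - (k - (m - n) + μ) = (m - n) - μ by omega]
          exact Nat.dvd_sub
            (Nat.dvd_sub (Nat.gcd_dvd_left m n) (Nat.gcd_dvd_right m n)) hgd
        · rw [if_neg h2] at hodd; omega
    · rw [hdeep j kp, if_neg hjn, if_neg (by omega), hdeep j (kp + μ), if_neg hjn,
        if_neg (by omega), show kp + μ - (n - s) = kp - (n - s) + μ by omega] at hodd
      obtain ⟨ha, hb, hdvd⟩ := hc4 (j - n) (by omega) hodd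
      refine ⟨by omega, by omega, ?_⟩
      rw [show k - j = (k - n) - (j - n) by omega, ← hgg]
      exact hdvd

lemma nat_mod_sub (a b : ℕ) (h1 : b ≤ a) (h2 : a < 2*b) : a % b = a - b := by
  rw [Nat.mod_eq_sub_mod h1, Nat.mod_eq_of_lt (by omega)]

lemma nat_mod_peel (a b : ℕ) (h1 : b ≤ a) : (a - b) % b = a % b := by
  conv_rhs => rw [show a = (a - b) + b by omega]
  rw [Nat.add_mod_right]

lemma airLam_two (m n : ℕ) (h : m - n ≠ 0) : airLam m n 2 = n % (m - n) := by
  rw [show (2:ℕ) = 0 + 2 from rfl, airLam_rec,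
    show airLam m n (0+1) = m - n from rfl, if_neg h]; rfl

lemma airLam_three (m n : ℕ) (h : airLam m n 2 ≠ 0) :
    airLam m n 3 = (m - n) % airLam m n 2 := by
  rw [show (3:ℕ) = 1 + 2 from rfl, airLam_rec, show (1:ℕ)+1 = 2 from rfl, if_neg h]; rfl

lemma air_main_s13 : ∀ m n i k, 0 < n → n < m →
    m ≤ k + airLam m n (2*i) →
    k + airLam m n (2*i) < m + (airBeta m n (2*i) - 1) * airLam m n (2*i+1) →
    MC m n k (k - (m - n)) (airLam m n (2*i+1)) := by
  intro m
  induction m using Nat.strong_induction_on with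
  | _ m IHm =>
  intro n i k hn hmn hk1 hk2
  have hβdef : airBeta m n (2*i) = airLam m n (2*i) / airLam m n (2*i+1) := rfl
  have hμpos : 0 < airLam m n (2*i+1) := by
    rcases Nat.eq_zero_or_pos (airLam m n (2*i+1)) with h | h
    · rw [h, mul_zero] at hk2; omega
    · exact h
  have hB2 : 2 ≤ airBeta m n (2*i) := by
    rcases Nat.lt_or_ge (airBeta m n (2*i)) 2 with h | h
    · exfalso
      have : airBeta m n (2*i) - 1 = 0 ∨ airBeta m n (2*i) - 1 = 1 := by omega
      rcases this with h' | h' <;> rw [h'] at hk2 <;> omega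
    · exact h
  rcases Nat.eq_zero_or_pos i with rfl | hi1
  -- ============ base case i = 0 ============
  · rw [show 2*0 = 0 by norm_num] at *
    rw [show (0:ℕ)+1 = 1 by norm_num] at *
    have hΛ0 : airLam m n 0 = n := rfl
    have hΛ1 : airLam m n 1 = m - n := rfl
    rw [hΛ0] at hk1 hk2
    rw [hΛ1] at hk2 hμpos ⊢
    rw [hβdef, hΛ0, hΛ1] at hB2 hk2
    have hr : 0 < m - n := hμpos
    have h2rn : 2 * (m - n) ≤ n := (Nat.le_div_iff_mul_le hr).1 hB2
    have hm2n : m < 2*n := by omega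
    obtain ⟨B', hB'⟩ : ∃ B', n / (m - n) = B' + 2 := ⟨n / (m-n) - 2, by omega⟩
    have hdiv : (m - n) * (B' + 2) + n % (m - n) = n := by
      rw [← hB']; exact Nat.div_add_mod n (m - n)
    rw [Nat.mul_add] at hdiv
    rw [hB', show B' + 2 - 1 = B' + 1 from rfl, Nat.add_mul, one_mul] at hk2
    have hmulc : (m - n) * B' = B' * (m - n) := Nat.mul_comm _ _
    rw [← hmulc] at hk2
    -- now: hdiv : B'*(m-n) + (m-n)*2 + n%(m-n) = n,  hk2 : k + n < m + (B'*(m-n) + (m-n))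
    have hkub : k + n % (m - n) < n := by omega
    have hklb : m - n ≤ k := by omega
    have hkkp : k = (k - (m - n)) + (m - n) := by omega
    have hdeep := fun j c => airEntry_deep m n j c hn hmn hm2n
    have hmodkp : (k - (m - n)) % (m - n) < m - n := Nat.mod_lt _ hr
    set kp := k - (m - n) with hkpdef
    have hkpr : (kp + (m - n)) % (m - n) = kp % (m - n) := Nat.add_mod_right _ _
    refine ⟨⟨by omega, by omega⟩, by omega,
      ⟨n + kp % (m - n), by omega, by omega, ?_, ?_, ?_, ?_⟩, ?_, ?_⟩
    · rw [hdeep (n + kp % (m - n)) kp, if_neg (by omega), if_pos (by omega),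
        show n + kp % (m - n) - n = kp % (m - n) by omega, if_pos rfl]
    · intro j hj1 hj2
      rw [hdeep j kp, if_neg (by omega), if_pos (by omega), if_neg (by omega)]
    · rw [hdeep (n + kp % (m - n)) (kp + (m - n)), if_neg (by omega), if_pos (by omega),
        show n + kp % (m - n) - n = kp % (m - n) by omega, hkpr, if_pos rfl]
    · intro c hcl hcr
      rw [hdeep (n + kp % (m - n)) c, if_neg (by omega), if_pos (by omega),
        show n + kp % (m - n) - n = kp % (m - n) by omega, if_neg ?_]
      intro hcontra
      have hceq : c % (m - n) = kp % (m - n) := hcontra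
      have hd : (m - n) ∣ c - kp := (Nat.modEq_iff_dvd' (by omega)).1 hceq.symm
      have := Nat.le_of_dvd (by omega) hd
      omega
    · rw [hdeep k kp, if_pos (by omega), if_neg (by omega),
        hdeep k (kp + (m - n)), if_pos (by omega), if_pos (by omega)]
    · intro j hj hodd
      by_cases hjn : j < n
      · rw [hdeep j kp, if_pos hjn, hdeep j (kp + (m - n)), if_pos hjn] at hodd
        by_cases h1 : j = kp
        · rw [if_pos h1, if_neg (by omega)] at hodd
          exact ⟨by omega, by omega, by
            rw [show k - j = m - n by omega]
            exact Nat.dvd_sub (Nat.gcd_dvd_left m n) (Nat.gcd_dvd_right m n)⟩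
        · rw [if_neg h1] at hodd
          by_cases h2 : j = kp + (m - n)
          · exact ⟨by omega, by omega, by rw [show k - j = 0 by omega]; exact dvd_zero _⟩
          · rw [if_neg h2] at hodd; omega
      · rw [hdeep j kp, if_neg hjn,
          if_pos (show kp < n - n % (m - n) by omega),
          hdeep j (kp + (m - n)), if_neg hjn,
          if_pos (show kp + (m - n) < n - n % (m - n) by omega), hkpr] at hodd
        exfalso
        split at hodd <;> omega
  -- ============ inductive case i ≥ 1 ============
  · have hΛ1 : airLam m n 1 = m - n := rfl
    have hpos2 : 0 < airLam m n 2 :=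
      airLam_pos_of_le m n 2 (2*i+1) (by omega) (by omega) hμpos
    have hpos3 : 0 < airLam m n 3 :=
      airLam_pos_of_le m n 3 (2*i+1) (by omega) (by omega) hμpos
    have h2 : airLam m n 2 = n % (m - n) := airLam_two m n (by omega)
    have h3 : airLam m n 3 = (m - n) % (n % (m - n)) := by
      rw [airLam_three m n (by omega), h2]
    have hΛle : airLam m n (2*i) ≤ airLam m n 2 := airLam_le_two m n (2*i) (by omega)
    rcases lt_trichotomy m (2*n) with hcmp | hcmp | hcmp
    -- ------ deep case: m < 2n ------
    · have hs0 : 0 < n % (m - n) := by omega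
      have hsr : n % (m - n) < m - n := Nat.mod_lt _ (by omega)
      have hkn : n ≤ k := by omega
      have hrs0 : 0 < (m - n) % (n % (m - n)) := by omega
      rcases lt_trichotomy (m - n) (2 * (n % (m - n))) with hrs | hrs | hrs
      · -- r < 2s : index shift 2
        have e0 : airLam m n 2 = airLam (m - n) (n % (m - n)) 0 := h2
        have e1 : airLam m n 3 = airLam (m - n) (n % (m - n)) 1 := by
          rw [h3, nat_mod_sub (m - n) (n % (m - n)) (by omega) hrs]; rfl
        have eshift := airLam_shift m n (m - n) (n % (m - n)) 2 0 e0 e1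
        have ea : airLam m n (2*i) = airLam (m - n) (n % (m - n)) (2*(i-1)) := by
          have h := eshift (2*i - 2)
          rw [show 2 + (2*i - 2) = 2*i by omega] at h
          rw [h, show 0 + (2*i - 2) = 2*(i-1) by omega]
        have eb : airLam m n (2*i+1) = airLam (m - n) (n % (m - n)) (2*(i-1)+1) := by
          have h := eshift (2*i - 1)
          rw [show 2 + (2*i - 1) = 2*i+1 by omega] at h
          rw [h, show 0 + (2*i - 1) = 2*(i-1)+1 by omega]
        have hsub := IHm (m - n) (by omega) (n % (m - n)) (i-1) (k - n) hs0 hsr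
          (by rw [← ea]; omega)
          (by
            rw [show airBeta (m-n) (n%(m-n)) (2*(i-1)) =
              airLam (m-n) (n%(m-n)) (2*(i-1)) / airLam (m-n) (n%(m-n)) (2*(i-1)+1) from rfl,
              ← ea, ← eb, ← hβdef]
            omega)
        rw [← eb, show (k - n) - ((m - n) - n % (m - n)) =
          (k - (m - n)) - (n - n % (m - n)) by omega] at hsub
        exact MC_deep m n k (k - (m - n)) (airLam m n (2*i+1)) hn hmn hcmp hs0 rfl hkn
          (by omega) hμpos (gcd_dvd_airLam m n (2*i+1)) hsub
      · -- r = 2s : impossible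
        exfalso
        have : (m - n) % (n % (m - n)) = 0 := Nat.dvd_iff_mod_eq_zero.mp ⟨2, by omega⟩
        omega
      · -- r > 2s : index shift 0
        have hz2 : airLam (m-n) (n%(m-n)) 2 = n % (m - n) := by
          rw [airLam_two (m-n) (n%(m-n)) (by omega), Nat.mod_eq_of_lt (by omega)]
        have e0 : airLam m n 2 = airLam (m-n) (n%(m-n)) 2 := by rw [h2, hz2]
        have e1 : airLam m n 3 = airLam (m-n) (n%(m-n)) 3 := by
          rw [h3, airLam_three (m-n) (n%(m-n)) (by omega), hz2,
            nat_mod_peel (m-n) (n%(m-n)) (by omega)]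
        have eshift := airLam_shift m n (m-n) (n%(m-n)) 2 2 e0 e1
        have ea : airLam m n (2*i) = airLam (m - n) (n % (m - n)) (2*i) := by
          have h := eshift (2*i - 2)
          rw [show 2 + (2*i - 2) = 2*i by omega] at h
          exact h
        have eb : airLam m n (2*i+1) = airLam (m - n) (n % (m - n)) (2*i+1) := by
          have h := eshift (2*i - 1)
          rw [show 2 + (2*i - 1) = 2*i+1 by omega] at h
          exact h
        have hsub := IHm (m - n) (by omega) (n % (m - n)) i (k - n) hs0 hsr
          (by rw [← ea]; omega)
          (by
            rw [show airBeta (m-n) (n%(m-n)) (2*i) =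
              airLam (m-n) (n%(m-n)) (2*i) / airLam (m-n) (n%(m-n)) (2*i+1) from rfl,
              ← ea, ← eb, ← hβdef]
            omega)
        rw [← eb, show (k - n) - ((m - n) - n % (m - n)) =
          (k - (m - n)) - (n - n % (m - n)) by omega] at hsub
        exact MC_deep m n k (k - (m - n)) (airLam m n (2*i+1)) hn hmn hcmp hs0 rfl hkn
          (by omega) hμpos (gcd_dvd_airLam m n (2*i+1)) hsub
    -- ------ m = 2n : impossible ------
    · exfalso
      rw [show m - n = n by omega, Nat.mod_self] at h2
      omega
    -- ------ peel case: m > 2n ------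
    · have hmn2 : n < m - n := by omega
      have h2' : airLam m n 2 = n := by rw [h2, Nat.mod_eq_of_lt hmn2]
      have emod : (m - n) % n = m % n := nat_mod_peel m n (by omega)
      have h3' : airLam m n 3 = m % n := by rw [h3, Nat.mod_eq_of_lt hmn2, emod]
      have hmod : m % n ≠ 0 := by omega
      have hkn : n < k := by omega
      rcases lt_trichotomy (m - n) (2*n) with hq | hq | hq
      · -- 2n < m < 3n : index shift 2
        have e0 : airLam m n 2 = airLam (m-n) n 0 := h2'
        have e1 : airLam m n 3 = airLam (m-n) n 1 := by
          rw [h3', show airLam (m-n) n 1 = (m-n) - n from rfl, ← emod,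
            nat_mod_sub (m-n) n (by omega) hq]
        have eshift := airLam_shift m n (m-n) n 2 0 e0 e1
        have ea : airLam m n (2*i) = airLam (m - n) n (2*(i-1)) := by
          have h := eshift (2*i - 2)
          rw [show 2 + (2*i - 2) = 2*i by omega] at h
          rw [h, show 0 + (2*i - 2) = 2*(i-1) by omega]
        have eb : airLam m n (2*i+1) = airLam (m - n) n (2*(i-1)+1) := by
          have h := eshift (2*i - 1)
          rw [show 2 + (2*i - 1) = 2*i+1 by omega] at h
          rw [h, show 0 + (2*i - 1) = 2*(i-1)+1 by omega]
        have hsub := IHm (m - n) (by omega) n (i-1) (k - n) hn (by omega)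
          (by rw [← ea]; omega)
          (by
            rw [show airBeta (m-n) n (2*(i-1)) =
              airLam (m-n) n (2*(i-1)) / airLam (m-n) n (2*(i-1)+1) from rfl,
              ← ea, ← eb, ← hβdef]
            omega)
        rw [← eb, show (k - n) - ((m - n) - n) = k - (m - n) by omega] at hsub
        exact MC_peel m n k (k - (m - n)) (airLam m n (2*i+1)) hn hcmp hmod hkn rfl
          hμpos (gcd_dvd_airLam m n (2*i+1)) hsub
      · -- m = 3n : impossible
        exfalso; apply hmod
        rw [show m = n * 3 by omega, Nat.mul_mod_right]
      · -- m > 3n : index shift 0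
        have hz2 : airLam (m-n) n 2 = n := by
          rw [airLam_two (m-n) n (by omega), Nat.mod_eq_of_lt (by omega)]
        have e0 : airLam m n 2 = airLam (m-n) n 2 := by rw [h2', hz2]
        have e1 : airLam m n 3 = airLam (m-n) n 3 := by
          rw [h3', airLam_three (m-n) n (by omega), hz2,
            nat_mod_peel (m-n) n (by omega), emod]
        have eshift := airLam_shift m n (m-n) n 2 2 e0 e1
        have ea : airLam m n (2*i) = airLam (m - n) n (2*i) := by
          have h := eshift (2*i - 2)
          rw [show 2 + (2*i - 2) = 2*i by omega] at h
          exact h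
        have eb : airLam m n (2*i+1) = airLam (m - n) n (2*i+1) := by
          have h := eshift (2*i - 1)
          rw [show 2 + (2*i - 1) = 2*i+1 by omega] at h
          exact h
        have hsub := IHm (m - n) (by omega) n i (k - n) hn (by omega)
          (by rw [← ea]; omega)
          (by
            rw [show airBeta (m-n) n (2*i) =
              airLam (m-n) n (2*i) / airLam (m-n) n (2*i+1) from rfl,
              ← ea, ← eb, ← hβdef]
            omega)
        rw [← eb, show (k - n) - ((m - n) - n) = k - (m - n) by omega] at hsub
        exact MC_peel m n k (k - (m - n)) (airLam m n (2*i+1)) hn hcmp hmod hkn rfl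
          hμpos (gcd_dvd_airLam m n (2*i+1)) hsub

/-- Low-complexity decoding, range `D̃_i`: for the `(K,D,U)` SUICP-SNI
with `(a,b) ∈ S_{K,D,U}`, `m = Kb`, `n = b(D+1)+a`, `m > n`, `L` the `m × n` AIR matrix
(with `λ_i = airLam m n (i+1)`, `β_i = airBeta m n i`, `l` the largest index with
`λ_l > 0`), let `k ∈ D̃_i = [m-λ_{2i-1}, m-λ_{2i-1}+(β_{2i}-1)λ_{2i}-1]` for some
`i ≤ ⌈l/2⌉`, and set `k' = k - (m-n)`, `μ = d_right(k'+d_down(k'), k')`, `t = ⌊k/b⌋`.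
Then the coordinatewise mod-2 sum of columns `k'` and `k'+μ` of `L` has a `1` in row `k`,
every other row `j` where it is `1` has `⌊j/b⌋ ∉ {t-U,…,t+D} (mod K)`, and receiver `R_t`
decodes `x_{t,(k mod b)+1}` as `c_{k'} + c_{k'+μ}` plus the XOR of known symbols. -/
theorem air_decoding_D_range (K D U a b m n : ℕ)
    (hUD : U ≤ D) (hUDK : U + D < K) (hb : 1 ≤ b)
    (hm : m = K * b) (hn : n = b * (D + 1) + a) (hmn : n < m)
    (hS : b * (U + 1) ≤ Nat.gcd (b * K) (b * (D + 1) + a))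
    (l : ℕ) (hl : 0 < airLam m n (l + 1)) (hl' : airLam m n (l + 2) = 0)
    (i k : ℕ) (hi : i ≤ (l + 1) / 2)
    (hk1 : m ≤ k + airLam m n (2 * i))
    (hk2 : k + airLam m n (2 * i) < m + (airBeta m n (2 * i) - 1) * airLam m n (2 * i + 1))
    (k' μ : ℕ) (hk' : k' = k - (m - n)) (hμ : μ = dRight m n (k' + dDown m n k') k') :
    ((airEntry m n k k' + airEntry m n k (k' + μ)) % 2 = 1 ∧
      ∀ j : ℕ, j < m → j ≠ k →
        (airEntry m n j k' + airEntry m n j (k' + μ)) % 2 = 1 →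
        ∀ s : ℕ, s ≤ U + D → j / b ≠ (k / b + (K - U) + s) % K) ∧
    (∀ x : ℕ → ZMod 2, ∀ c : ℕ → ZMod 2,
      (∀ s : ℕ, c s = ∑ j ∈ Finset.range m, x j * (airEntry m n j s : ZMod 2)) →
      x k = c k' + c (k' + μ)
          + ∑ j ∈ (Finset.range m).filter
              (fun j => j ≠ k ∧ (airEntry m n j k' + airEntry m n j (k' + μ)) % 2 = 1),
              x j) := by
  have hbpos : 0 < b := hb
  have hn0 : 0 < n := by
    have : b ≤ b * (D + 1) := Nat.le_mul_of_pos_right b (by omega)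
    omega
  have hμ0 : 0 < airLam m n (2*i+1) := by
    rcases Nat.eq_zero_or_pos (airLam m n (2*i+1)) with h | h
    · rw [h, mul_zero] at hk2; omega
    · exact h
  obtain ⟨⟨hc1a, hc1b⟩, hc2, ⟨R, hR1, hR2, hR3, hR4, hR5, hR6⟩, hc3, hc4⟩ :=
    air_main_s13 m n i k hn0 hmn hk1 hk2
  subst hk'
  have hdd : dDown m n (k - (m - n)) = R - (k - (m - n)) := by
    apply IsGreatest.csSup_eq
    constructor
    · refine ⟨by omega, by omega, ?_⟩
      rw [show k - (m - n) + (R - (k - (m - n))) = R by omega]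
      exact hR3
    · intro v hv
      obtain ⟨hv1, hv2, hv3⟩ := hv
      by_contra hvc
      have h0 := hR4 (k - (m - n) + v) (by omega) hv2
      omega
  have hμval : μ = airLam m n (2*i+1) := by
    rw [hμ, hdd, show k - (m - n) + (R - (k - (m - n))) = R by omega]
    apply IsLeast.csInf_eq
    constructor
    · exact ⟨hμ0, hc2, hR5⟩
    · intro v hv
      obtain ⟨hv1, hv2, hv3⟩ := hv
      by_contra hvc
      have h0 := hR6 (k - (m - n) + v) (by omega) (by omega)
      omega
  subst hμval
  -- arithmetic preliminaries
  have hKD : D + 1 < K := by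
    have e : K * b = b * K := Nat.mul_comm K b
    have h2 : b * (D + 1) < b * K := by omega
    exact lt_of_mul_lt_mul_left h2 (Nat.zero_le b)
  have hgcd : b * (U + 1) ≤ Nat.gcd m n := by
    rw [hm, hn, Nat.mul_comm K b]; exact hS
  have hmnb : m - n ≤ b * (K - D - 1) := by
    have e1 : b * (K - D - 1) + b * (D + 1) = b * K := by
      rw [← Nat.mul_add]
      congr 1
      omega
    have e : K * b = b * K := Nat.mul_comm K b
    omega
  refine ⟨⟨hc3, ?_⟩, ?_⟩
  · -- interference condition
    intro j hj hjk hodd s hs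
    obtain ⟨hja, hjb, hjdvd⟩ := hc4 j hj hodd
    have hjlt : j < k := by omega
    have hkj1 : b * (U + 1) ≤ k - j :=
      le_trans hgcd (Nat.le_of_dvd (by omega) hjdvd)
    have hkj2 : k - j ≤ m - n := by omega
    have hdiv1 : j / b + (U + 1) ≤ k / b := by
      have h1 : j + b * (U + 1) ≤ k := by omega
      have h2 := Nat.div_le_div_right (c := b) h1
      rwa [Nat.add_mul_div_left j (U + 1) hbpos] at h2
    have hdiv2 : k / b ≤ j / b + (K - D - 1) := by
      have h1 : k ≤ j + b * (K - D - 1) := by omega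
      have h2 := Nat.div_le_div_right (c := b) h1
      rwa [Nat.add_mul_div_left j (K - D - 1) hbpos] at h2
    have hkK : k / b < K := by
      rw [Nat.div_lt_iff_lt_mul hbpos]
      have e : K * b = b * K := Nat.mul_comm K b
      omega
    have hjK : j / b < K := by
      rw [Nat.div_lt_iff_lt_mul hbpos]
      have e : K * b = b * K := Nat.mul_comm K b
      omega
    intro heq
    have hqe := Nat.div_add_mod (k / b + (K - U) + s) K
    rw [← heq] at hqe
    obtain ⟨q, hqdef⟩ : ∃ q, (k / b + (K - U) + s) / K = q := ⟨_, rfl⟩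
    rw [hqdef] at hqe
    have hub : k / b + (K - U) + s < 3 * K := by omega
    have hlb : K + j / b < k / b + (K - U) + s := by omega
    have hq2 : q = 2 := by
      rcases Nat.lt_or_ge q 2 with h | h
      · exfalso
        have h01 : q = 0 ∨ q = 1 := by omega
        rcases h01 with h' | h' <;> rw [h'] at hqe <;> omega
      · rcases Nat.lt_or_ge q 3 with h3 | h3
        · omega
        · exfalso
          have hm3 : K * 3 ≤ K * q := Nat.mul_le_mul_left K h3
          omega
    rw [hq2] at hqe
    omega
  · -- decoding identity
    intro x c hc
    set kp := k - (m - n) with hkpdef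
    set μ0 := airLam m n (2*i+1) with hμ0def
    have hpt : ∀ j, x j * (airEntry m n j kp : ZMod 2) + x j * (airEntry m n j (kp + μ0) : ZMod 2)
        = if (airEntry m n j kp + airEntry m n j (kp + μ0)) % 2 = 1 then x j else 0 := by
      intro j
      have h1 := airEntry_le_one n m j kp
      have h2 := airEntry_le_one n m j (kp + μ0)
      rcases Nat.le_one_iff_eq_zero_or_eq_one.1 h1 with h1' | h1' <;>
        rcases Nat.le_one_iff_eq_zero_or_eq_one.1 h2 with h2' | h2' <;>
        rw [h1', h2'] <;> norm_num
      exact CharTwo.add_self_eq_zero (x j)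
    have hsum : c kp + c (kp + μ0) =
        ∑ j ∈ Finset.range m,
          (if (airEntry m n j kp + airEntry m n j (kp + μ0)) % 2 = 1 then x j else 0) := by
      rw [hc kp, hc (kp + μ0), ← Finset.sum_add_distrib]
      exact Finset.sum_congr rfl fun j _ => hpt j
    rw [← Finset.sum_filter] at hsum
    have hkmem : k ∈ (Finset.range m).filter
        (fun j => (airEntry m n j kp + airEntry m n j (kp + μ0)) % 2 = 1) := by
      simp only [Finset.mem_filter, Finset.mem_range]
      exact ⟨hc1b, hc3⟩
    rw [← Finset.sum_erase_add _ _ hkmem] at hsum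
    have herase : ((Finset.range m).filter
          (fun j => (airEntry m n j kp + airEntry m n j (kp + μ0)) % 2 = 1)).erase k =
        (Finset.range m).filter
          (fun j => j ≠ k ∧ (airEntry m n j kp + airEntry m n j (kp + μ0)) % 2 = 1) := by
      ext j
      simp only [Finset.mem_erase, Finset.mem_filter, Finset.mem_range]
      tauto
    rw [herase] at hsum
    rw [hsum, add_comm _ (x k), add_assoc, CharTwo.add_self_eq_zero, add_zero]
end

section
/- Let K, D, U be integers with 0 ≤ U ≤ D and U + D < K, let (a,b) ∈ S_{K,D,U}, set m = Kb and n = b(D+1)+a with m > n, and let L be the AIR matrix of size m × n with Euclidean data λ_i, β_i, l. Then for every row index k with m − λ_l ≤ k ≤ m − 1 (where λ_l = gcd(m,n)), setting k' = k − (m−n) and t = ⌊k/b⌋: L(k, k') = 1, and every other row index j ≠ k with L(j, k') = 1 satisfies ⌊j/b⌋ ≢ t−U, t−U+1, …, t+D (mod K). Consequently, receiver R_t of the (K,D,U) SUICP-SNI decodes its wanted message symbol x_{t,(k mod b)+1} from the single broadcast symbol c_{k'} by subtracting message symbols it already knows. -/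
set_option linter.unusedVariables false

lemma air_rows_char (n β j c : ℕ) (hc : c < n) (hj : j < n * β) (hjc : j % n = c) :
    ∃ q, q < β ∧ j = n * q + c := by
  refine ⟨j / n, ?_, ?_⟩
  · by_contra h
    push_neg at h
    have h1 := Nat.mul_le_mul_left n h
    have h2 : n * (j / n) ≤ j := Nat.mul_div_le j n
    omega
  · conv_lhs => rw [← Nat.div_add_mod j n]
    rw [hjc]

lemma air_support : ∀ n m c : ℕ, 0 < n → n ≤ m →
    n ≤ c + Nat.gcd m n → c < n →
    airEntry m n (c + (m - n)) c = 1 ∧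
    ∀ j, j < m → airEntry m n j c = 1 →
      j = c + (m - n) ∨ (c ≤ j ∧ j + Nat.gcd m n ≤ c + (m - n)) := by
  intro n
  induction n using Nat.strong_induction_on with
  | _ n ih =>
  intro m c hn hnm hc1 hc2
  have hgcd : Nat.gcd m n = Nat.gcd (m % n) n := by
    rw [Nat.gcd_comm, Nat.gcd_rec]
  have hgn : Nat.gcd m n ≤ n := Nat.le_of_dvd hn (Nat.gcd_dvd_right m n)
  by_cases hr0 : m % n = 0
  · -- divisible case: g = n
    have hgeq : Nat.gcd m n = n := by rw [hgcd, hr0, Nat.gcd_zero_left]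
    obtain ⟨β, hβ⟩ := Nat.dvd_of_mod_eq_zero hr0
    have hβn : n * (β - 1) + n = n * β := by
      cases β with
      | zero => omega
      | succ b => simp [Nat.mul_succ]
    have hk0 : (c + (m - n)) % n = c := by
      have : c + (m - n) = c + n * (β - 1) := by omega
      rw [this, Nat.add_mul_mod_self_left, Nat.mod_eq_of_lt hc2]
    constructor
    · rw [airEntry]
      simp [hn.ne', hr0, hk0]
    · intro j hj hje
      rw [airEntry] at hje
      simp only [hn.ne', dite_false, dif_neg, hr0, dite_true, dif_pos] at hje
      have hjc : j % n = c := by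
        by_contra h; simp [h] at hje
      obtain ⟨q, hq, hjq⟩ := air_rows_char n β j c hc2 (by omega) hjc
      rcases Nat.lt_or_ge q (β - 1) with h | h
      · right
        have h1 : n * (q + 1) ≤ n * (β - 1) := Nat.mul_le_mul_left n (by omega)
        have h2 : n * (q + 1) = n * q + n := by ring
        omega
      · left
        have : q = β - 1 := by omega
        subst this
        omega
  · -- m % n ≠ 0
    set r := m % n with hr
    have hrn : r < n := Nat.mod_lt _ hn
    have hrpos : 0 < r := Nat.pos_of_ne_zero hr0
    have hgr : Nat.gcd m n = Nat.gcd (n % r) r := by rw [hgcd, Nat.gcd_rec]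
    have hgdr : Nat.gcd m n ∣ r := by rw [hgr]; exact Nat.gcd_dvd_right _ _
    have hgler : Nat.gcd m n ≤ r := Nat.le_of_dvd hrpos hgdr
    obtain ⟨β, hβd⟩ : ∃ β, n * β + r = m := ⟨m / n, by rw [hr]; exact Nat.div_add_mod m n⟩
    have hβ1 : 1 ≤ β := by
      rcases Nat.eq_zero_or_pos β with h | h
      · subst h; simp at hβd; omega
      · exact h
    have hmr : m - r = n * β := by omega
    have hnβ : n * 1 ≤ n * β := Nat.mul_le_mul_left n hβ1
    have hnβ' : n ≤ n * β := by omega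
    have hk0ge : m - r ≤ c + (m - n) := by
      have h1 : n * (β - 1) + n = n * β := by
        cases β with
        | zero => omega
        | succ b => simp [Nat.mul_succ]
      omega
    by_cases hr'0 : n % r = 0
    · -- terminal horizontal block: g = r
      have hgeq : Nat.gcd m n = r := by rw [hgr, hr'0, Nat.gcd_zero_left]
      obtain ⟨γ, hγ⟩ := Nat.dvd_of_mod_eq_zero hr'0
      have hγ1 : 1 ≤ γ := by
        rcases Nat.eq_zero_or_pos γ with h | h
        · subst h; omega
        · exact h
      have hγn : r * (γ - 1) + r = r * γ := by
        cases γ with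
        | zero => omega
        | succ g => simp [Nat.mul_succ]
      have hcr : c % r = c - (n - r) := by
        have h1 : c - (n - r) < r := by omega
        have h2 : c = (c - (n - r)) + r * (γ - 1) := by omega
        conv_lhs => rw [h2]
        rw [Nat.add_mul_mod_self_left, Nat.mod_eq_of_lt h1]
      constructor
      · rw [airEntry]
        have hnot : ¬ (c + (m - n) < m - r) := by omega
        simp only [hn.ne', dite_false, dif_neg, hr0, ← hr, hnot, if_false, hr'0,
          Nat.sub_zero, hc2, if_true, dite_true, dif_pos]
        rw [if_pos]
        omega
      · intro j hj hje
        rw [airEntry] at hje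
        simp only [hn.ne', dite_false, dif_neg, hr0, ← hr, hr'0, Nat.sub_zero, hc2,
          if_true, dite_true, dif_pos] at hje
        by_cases hjtop : j < m - r
        · rw [if_pos hjtop] at hje
          have hjc : j % n = c := by by_contra h; simp [h] at hje
          obtain ⟨q, hq, hjq⟩ := air_rows_char n β j c hc2 (by omega) hjc
          right
          have h1 : n * (q + 1) ≤ n * β := Nat.mul_le_mul_left n (by omega)
          have h2 : n * (q + 1) = n * q + n := by ring
          omega
        · rw [if_neg hjtop] at hje
          have hjc : c % r = j - (m - r) := by by_contra h; simp [h] at hje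
          left
          omega
    · -- recursive case
      set r' := n % r with hr'
      have hr'r : r' < r := Nat.mod_lt _ hrpos
      have hr'pos : 0 < r' := Nat.pos_of_ne_zero hr'0
      have hgr' : Nat.gcd m n = Nat.gcd r r' := by
        rw [hgr, Nat.gcd_comm]
      have hgler' : Nat.gcd m n ≤ r' :=
        Nat.le_of_dvd hr'pos (by rw [hgr']; exact Nat.gcd_dvd_right r r')
      -- apply IH with (m := r, n := r', c := c - (n - r'))
      have hcge : n - r' ≤ c := by omega
      obtain ⟨IH1, IH2⟩ := ih r' (by omega) r (c - (n - r')) hr'pos (le_of_lt hr'r)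
        (by rw [← hgr']; omega) (by omega)
      have hknot : ¬ (c + (m - n) < m - r) := by omega
      have hcnot : ¬ (c < n - r') := by omega
      have hkey : c + (m - n) - (m - r) = c - (n - r') + (r - r') := by omega
      constructor
      · rw [airEntry]
        simp only [hn.ne', dite_false, dif_neg, hr0, ← hr, hknot, if_false, ← hr',
          hcnot, dite_true, dif_pos]
        rw [hkey]
        exact IH1
      · intro j hj hje
        rw [airEntry] at hje
        simp only [hn.ne', dite_false, dif_neg, hr0, ← hr, ← hr', hcnot,
          dite_true, dif_pos] at hje
        by_cases hjtop : j < m - r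
        · rw [if_pos hjtop] at hje
          have hjc : j % n = c := by by_contra h; simp [h] at hje
          obtain ⟨q, hq, hjq⟩ := air_rows_char n β j c hc2 (by omega) hjc
          right
          have h1 : n * (q + 1) ≤ n * β := Nat.mul_le_mul_left n (by omega)
          have h2 : n * (q + 1) = n * q + n := by ring
          omega
        · rw [if_neg hjtop] at hje
          have := IH2 (j - (m - r)) (by omega) hje
          rw [← hgr'] at this
          omega

/-- Low-complexity decoding, last row range: for the `(K,D,U)` SUICP-SNI
with `(a,b) ∈ S_{K,D,U}`, `m = Kb`, `n = b(D+1)+a`, `m > n`, and `L` the `m × n` AIR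
matrix, every row index `k` with `m - gcd(m,n) ≤ k ≤ m - 1` (with `k' = k - (m-n)` and
`t = ⌊k/b⌋`) satisfies `L(k, k') = 1`, while every other row `j` with `L(j, k') = 1` has
`⌊j/b⌋ ∉ {t-U, …, t+D} (mod K)`; hence receiver `R_t` decodes its wanted symbol
`x_{t,(k mod b)+1}` from the single broadcast symbol `c_{k'}` by subtracting message
symbols it already knows. -/
theorem air_decoding_last_range (K D U a b m n : ℕ)
    (hUD : U ≤ D) (hUDK : U + D < K) (hb : 1 ≤ b)
    (hm : m = K * b) (hn : n = b * (D + 1) + a) (hmn : n < m)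
    (hS : b * (U + 1) ≤ Nat.gcd (b * K) (b * (D + 1) + a)) :
    ∀ k : ℕ, m ≤ k + Nat.gcd m n → k < m →
      ∀ k' : ℕ, k' = k - (m - n) →
      (airEntry m n k k' = 1 ∧
        ∀ j : ℕ, j < m → j ≠ k → airEntry m n j k' = 1 →
          ∀ s : ℕ, s ≤ U + D → j / b ≠ (k / b + (K - U) + s) % K) ∧
      (∀ (F : Type*) [Field F] (x : ℕ → F),
        x k = (∑ j ∈ Finset.range m, x j * (if airEntry m n j k' = 1 then (1 : F) else 0))
            - ∑ j ∈ (Finset.range m).filter (fun j => j ≠ k ∧ airEntry m n j k' = 1), x j) := by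
  intro k hk1 hk2 k' hk'
  have hbD : b * 1 ≤ b * (D + 1) := Nat.mul_le_mul_left b (by omega)
  have hn0 : 0 < n := by omega
  have hgS : b * (U + 1) ≤ Nat.gcd m n := by
    rw [hm, hn, Nat.mul_comm K b]; exact hS
  have hgn : Nat.gcd m n ≤ n := Nat.le_of_dvd hn0 (Nat.gcd_dvd_right m n)
  have hbU : b * 1 ≤ b * (U + 1) := Nat.mul_le_mul_left b (by omega)
  have hc2 : k' < n := by omega
  have hc1 : n ≤ k' + Nat.gcd m n := by omega
  have hkk' : k = k' + (m - n) := by omega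
  obtain ⟨H1, H2⟩ := air_support n m k' hn0 (le_of_lt hmn) hc1 hc2
  have hair : airEntry m n k k' = 1 := by rw [hkk']; exact H1
  refine ⟨⟨hair, ?_⟩, ?_⟩
  · intro j hj hjk hje s hs
    rcases H2 j hj hje with h | ⟨h1, h2⟩
    · exact absurd (by omega : j = k) hjk
    · obtain ⟨E, hE⟩ : ∃ E, K = D + 1 + E := ⟨K - D - 1, by omega⟩
      have kd := Nat.div_add_mod k b
      have jd := Nat.div_add_mod j b
      have hkb : k % b < b := Nat.mod_lt _ (by omega)
      have hjb : j % b < b := Nat.mod_lt _ (by omega)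
      have e1 : b * (j / b + (U + 1)) = b * (j / b) + b * (U + 1) := by ring
      have e2 : b * (k / b + 1) = b * (k / b) + b := by ring
      have hjgk : j + Nat.gcd m n ≤ k := by omega
      have hUt : j / b + (U + 1) < k / b + 1 :=
        Nat.lt_of_mul_lt_mul_left (a := b) (by omega)
      have hm' : m = b * (D + 1) + b * E := by rw [hm, hE]; ring
      have hjk2 : k ≤ j + (m - n) := by omega
      have e4 : b * (j / b + (E + 1)) = b * (j / b) + b * E + b := by ring
      have hUt2 : k / b < j / b + (E + 1) :=
        Nat.lt_of_mul_lt_mul_left (a := b) (by omega)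
      have e5 : b * K = K * b := by ring
      have htK : k / b < K :=
        Nat.lt_of_mul_lt_mul_left (a := b) (by omega)
      intro hcon
      obtain ⟨q, hqd⟩ : ∃ q, K * q + (k / b + (K - U) + s) % K = k / b + (K - U) + s :=
        ⟨_, Nat.div_add_mod _ K⟩
      rw [← hcon] at hqd
      have hq3 : q < 3 :=
        Nat.lt_of_mul_lt_mul_left (a := K) (show K * q < K * 3 by omega)
      rcases (by omega : q = 0 ∨ q = 1 ∨ q = 2) with rfl | rfl | rfl <;> omega
  · intro F _ x
    classical
    have hsum : ∑ j ∈ Finset.range m, x j * (if airEntry m n j k' = 1 then (1 : F) else 0)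
        = ∑ j ∈ (Finset.range m).filter (fun j => airEntry m n j k' = 1), x j := by
      rw [Finset.sum_filter]
      refine Finset.sum_congr rfl fun j _ => ?_
      by_cases h : airEntry m n j k' = 1 <;> simp [h]
    have hins : (Finset.range m).filter (fun j => airEntry m n j k' = 1)
        = insert k ((Finset.range m).filter (fun j => j ≠ k ∧ airEntry m n j k' = 1)) := by
      ext j
      simp only [Finset.mem_insert, Finset.mem_filter, Finset.mem_range]
      constructor
      · rintro ⟨hj, he⟩
        by_cases hjk : j = k
        · exact Or.inl hjk
        · exact Or.inr ⟨hj, hjk, he⟩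
      · rintro (rfl | ⟨hj, _, he⟩)
        · exact ⟨hk2, hair⟩
        · exact ⟨hj, he⟩
    rw [hsum, hins, Finset.sum_insert (by simp)]
    ring
end
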